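/- arXiv:2106.07878 — 7 statements merged into one kernel-verified Lean document; each statement's English description precedes it below -/
import Mathlib

section
/- Let G be a graph on vertices v_1,...,v_n and suppose the vertices v_1,...,v_r (r ≥ 2) all have the same closed neighborhood in G. Let G^σ be the signed graph obtained from G by switching about the set {v_1,...,v_t} for some t with 1 ≤ t ≤ r−1. Then the adjacency matrix A(G^σ) has at least r−1 linearly independent eigenvectors for the eigenvalue −1, each having nonzero entry sum; in particular −1 is a main eigenvalue of A(G^σ) of multiplicity at least r−1. Concretely, the r−1 vectors e_i + e_{t+1} (1 ≤ i ≤ t) and e_1 + e_{t+i} (2 ≤ i ≤ r−t) are linearly independent main eigenvectors of A(G^σ) for the eigenvalue −1, where e_j denotes the j-th standard basis vector of ℝ^n. -/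
/-!
Vertices with equal closed neighbourhoods index equal rows of `A + I`, so for two of them `a, b`
the vector `A e_b - A e_a` equals `e_a - e_b`. Switching multiplies row `u` and column `v` by
signs `s_u, s_v`; with `s_a = -1` and `s_b = 1` this gives
`A(G^σ)(e_a + e_b) = (s_u (A e_b - A e_a)_u)_u = -(e_a + e_b)`.
Each of the paper's vectors is such a sum `e_a + e_b` over a switched and an unswitched twin.
They are linearly independent since each vector with `k ≥ t` is the only one supported at
coordinate `k + 1`, and once those are removed every remaining vector owns a coordinate.
-/

open Matrix

/-- The signed adjacency matrix obtained from the matrix `A` by switching about the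
vertex set `X`: entry `(i,j)` is multiplied by `-1` exactly when one of `i, j` lies in `X`. -/
def switchMatrix {m : Type*} [DecidableEq m] (X : Finset m) (A : Matrix m m ℝ) :
    Matrix m m ℝ :=
  fun i j => (if i ∈ X then (-1 : ℝ) else 1) * A i j * (if j ∈ X then (-1 : ℝ) else 1)

/-- The `k`-th standard basis vector of `ℝ^n` (with `ℕ`-valued index `k`). -/
def stdVec (n : ℕ) (k : ℕ) : Fin n → ℝ := fun j => if (j : ℕ) = k then 1 else 0

namespace SimpleGraph

variable {V : Type*} [DecidableEq V] (G : SimpleGraph V) [DecidableRel G.Adj]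

theorem adjMatrix_add_one_apply (a u : V) :
    (G.adjMatrix ℝ + 1) a u = if G.Adj a u ∨ u = a then 1 else 0 := by
  by_cases hua : u = a
  · subst hua
    simp
  · simp [one_apply, hua, Ne.symm hua]

theorem adjMatrix_add_one_row_eq {a b : V}
    (h : ({u | G.Adj a u ∨ u = a} : Set V) = {u | G.Adj b u ∨ u = b}) :
    (G.adjMatrix ℝ + 1) a = (G.adjMatrix ℝ + 1) b := by
  ext u
  simp only [adjMatrix_add_one_apply]
  exact if_congr (Set.ext_iff.mp h u) rfl rfl

theorem switchMatrix_adjMatrix_mulVec_single_add_single [Fintype V] {X : Finset V} {a b : V}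
    (ha : a ∈ X) (hb : b ∉ X)
    (h : ({u | G.Adj a u ∨ u = a} : Set V) = {u | G.Adj b u ∨ u = b}) :
    switchMatrix X (G.adjMatrix ℝ) *ᵥ (Pi.single a 1 + Pi.single b 1) =
      -(Pi.single a 1 + Pi.single b 1) := by
  have hab : a ≠ b := by rintro rfl; exact hb ha
  ext u
  have htwin : G.adjMatrix ℝ u b - G.adjMatrix ℝ u a =
      (Pi.single a 1 : V → ℝ) u - (Pi.single b 1 : V → ℝ) u := by
    have hrow := congrFun (adjMatrix_add_one_row_eq G h) u
    rw [Matrix.add_apply, Matrix.add_apply, one_apply, one_apply] at hrow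
    rw [G.isSymm_adjMatrix.apply a u, G.isSymm_adjMatrix.apply b u, Pi.single_apply,
      Pi.single_apply]
    split_ifs at hrow ⊢ <;> subst_vars <;> first | linarith | contradiction
  simp only [mulVec_add, mulVec_single_one, Pi.add_apply, Pi.neg_apply, col_apply,
    switchMatrix, ha, hb, if_true, if_false]
  rw [show ∀ s : ℝ, s * G.adjMatrix ℝ u a * -1 + s * G.adjMatrix ℝ u b * 1 =
      s * (G.adjMatrix ℝ u b - G.adjMatrix ℝ u a) from fun s => by ring, htwin]
  rcases eq_or_ne u a with rfl | hua
  · simp [ha, hab]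
  rcases eq_or_ne u b with rfl | hub
  · simp [hb, hab]
  · simp [hua, hub]

end SimpleGraph

theorem stdVec_eq_single {n k : ℕ} (hk : k < n) : stdVec n k = Pi.single ⟨k, hk⟩ 1 := by
  ext j
  simp [stdVec, Pi.single_apply, Fin.ext_iff]

theorem eq_zero_of_sum_smul_eq_zero {ι α R : Type*} [Fintype ι] [Semiring R] [NoZeroDivisors R]
    {v : ι → α → R} {g : ι → R}
    (hg : ∑ i, g i • v i = 0) {k : ι} {j : α} (hk : v k j ≠ 0)
    (hother : ∀ i ≠ k, g i * v i j = 0) : g k = 0 := by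
  have hj := congrFun hg j
  simp only [Finset.sum_apply, Pi.smul_apply, smul_eq_mul, Pi.zero_apply] at hj
  rw [Finset.sum_eq_single k (fun i _ hi => hother i hi) (by simp)] at hj
  exact (mul_eq_zero.mp hj).resolve_right hk

/-- The paper's vectors `e_{k+1} + e_{t+1}` (`k < t`) and `e_1 + e_{k+2}` (`k ≥ t`), indexed
from `0`. -/
def twinPairVec (n t k : ℕ) : Fin n → ℝ :=
  if k < t then stdVec n k + stdVec n t else stdVec n 0 + stdVec n (k + 1)

theorem twinPairVec_apply (n t k : ℕ) (j : Fin n) :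
    twinPairVec n t k j =
      if k < t then (if (j : ℕ) = k then 1 else 0) + (if (j : ℕ) = t then 1 else 0)
      else (if (j : ℕ) = 0 then 1 else 0) + (if (j : ℕ) = k + 1 then 1 else 0) := by
  by_cases hk : k < t <;> simp [twinPairVec, stdVec, hk]

theorem linearIndependent_twinPairVec {n r : ℕ} (t : ℕ) (hrn : r ≤ n) :
    LinearIndependent ℝ (fun k : Fin (r - 1) => twinPairVec n t k) := by
  rw [Fintype.linearIndependent_iff]
  intro g hg
  have coeff_eq_zero_of_le (k : Fin (r - 1)) (hk : t ≤ k) : g k = 0 := by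
    refine eq_zero_of_sum_smul_eq_zero hg (j := ⟨k + 1, by omega⟩) ?_ fun i hi => ?_
    · simp only [twinPairVec_apply]
      split_ifs <;> first | omega | norm_num
    · have hi : (i : ℕ) ≠ k := Fin.val_ne_of_ne hi
      simp only [twinPairVec_apply]
      split_ifs <;> first | omega | contradiction | simp
  intro k
  rcases le_or_gt t k with hk | hk
  · exact coeff_eq_zero_of_le k hk
  rcases eq_or_ne (k : ℕ) 0 with hk0 | hk0
  · refine eq_zero_of_sum_smul_eq_zero hg (j := ⟨0, by omega⟩) ?_ fun i hi => ?_
    · simp only [twinPairVec_apply]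
      split_ifs <;> first | omega | norm_num
    · have hi : (i : ℕ) ≠ k := Fin.val_ne_of_ne hi
      rcases le_or_gt t i with hit | hit
      · simp [coeff_eq_zero_of_le i hit]
      simp only [twinPairVec_apply]
      split_ifs <;> first | omega | contradiction | simp
  · refine eq_zero_of_sum_smul_eq_zero hg (j := ⟨k, by omega⟩) ?_ fun i hi => ?_
    · simp only [twinPairVec_apply]
      split_ifs <;> first | omega | norm_num
    · have hi : (i : ℕ) ≠ k := Fin.val_ne_of_ne hi
      simp only [twinPairVec_apply]
      split_ifs <;> first | omega | contradiction | simp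

theorem LinearIndependent.card_le_finrank_of_forall_mem {K M ι : Type*} [DivisionRing K]
    [AddCommGroup M] [Module K M] [Fintype ι] {p : Submodule K M} [FiniteDimensional K p]
    {v : ι → M} (hv : LinearIndependent K v) (hp : ∀ i, v i ∈ p) :
    Fintype.card ι ≤ Module.finrank K p := by
  rw [← finrank_span_eq_card hv]
  exact Submodule.finrank_mono (Submodule.span_le.mpr (Set.range_subset_iff.mpr hp))

theorem exists_twinPairVec_eq_single_add_single {n r t : ℕ} (hrn : r ≤ n) (ht1 : 1 ≤ t)
    (htr : t ≤ r - 1) {k : ℕ} (hk : k < r - 1) :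
    ∃ a b : Fin n, (a : ℕ) < t ∧ t ≤ (b : ℕ) ∧ (b : ℕ) < r ∧
      twinPairVec n t k = Pi.single a 1 + Pi.single b 1 := by
  by_cases hkt : k < t
  · refine ⟨⟨k, by omega⟩, ⟨t, by omega⟩, hkt, le_rfl, show t < r by omega, ?_⟩
    rw [twinPairVec, if_pos hkt, stdVec_eq_single, stdVec_eq_single]
  · refine ⟨⟨0, by omega⟩, ⟨k + 1, by omega⟩, ht1, show t ≤ k + 1 by omega,
      show k + 1 < r by omega, ?_⟩
    rw [twinPairVec, if_neg hkt, stdVec_eq_single, stdVec_eq_single]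

theorem stmt0_general {n r t : ℕ} (hrn : r ≤ n) (ht1 : 1 ≤ t) (htr : t ≤ r - 1)
    (G : SimpleGraph (Fin n)) [DecidableRel G.Adj]
    (hnbr : ∀ i j : Fin n, (i : ℕ) < r → (j : ℕ) < r →
      ({u | G.Adj i u ∨ u = i} : Set (Fin n)) = {u | G.Adj j u ∨ u = j})
    (B : Matrix (Fin n) (Fin n) ℝ)
    (hB : B = switchMatrix (Finset.univ.filter (fun v : Fin n => (v : ℕ) < t))
      (G.adjMatrix ℝ))
    (w : Fin (r - 1) → (Fin n → ℝ))
    (hw : ∀ k : Fin (r - 1), w k = if (k : ℕ) < t then stdVec n k + stdVec n t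
      else stdVec n 0 + stdVec n ((k : ℕ) + 1)) :
    LinearIndependent ℝ w ∧
    (∀ k, B.mulVec (w k) = (-1 : ℝ) • w k) ∧
    (∀ k, ∑ j, w k j ≠ 0) ∧
    r - 1 ≤ Module.finrank ℝ (Module.End.eigenspace (Matrix.toLin' B) (-1)) := by
  obtain rfl : w = fun k : Fin (r - 1) => twinPairVec n t k := funext hw
  have hpair (k : Fin (r - 1)) := exists_twinPairVec_eq_single_add_single hrn ht1 htr k.isLt
  have heig (k : Fin (r - 1)) : B *ᵥ twinPairVec n t k = (-1 : ℝ) • twinPairVec n t k := by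
    obtain ⟨a, b, hat, htb, hbr, hab⟩ := hpair k
    rw [hab, hB, neg_one_smul]
    exact G.switchMatrix_adjMatrix_mulVec_single_add_single (by simpa) (by simpa)
      (hnbr a b (by omega) hbr)
  have hli := linearIndependent_twinPairVec (n := n) (r := r) t hrn
  refine ⟨hli, heig, fun k => ?_, ?_⟩
  · obtain ⟨a, b, -, -, -, hab⟩ := hpair k
    simp [hab, Finset.sum_add_distrib]
  · simpa using hli.card_le_finrank_of_forall_mem fun k => by
      rw [Module.End.mem_eigenspace_iff, toLin'_apply, heig k]

/-- If `v_1, …, v_r` (here the vertices `0, …, r-1` of `Fin n`) all have the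
same closed neighbourhood in `G`, and `G^σ` is obtained from `G` by switching about
`{v_1, …, v_t}` with `1 ≤ t ≤ r - 1`, then the `r - 1` vectors `e_i + e_{t+1}` (`1 ≤ i ≤ t`)
and `e_1 + e_{t+i}` (`2 ≤ i ≤ r - t`) are linearly independent main eigenvectors of
`A(G^σ)` for the eigenvalue `-1`; in particular `-1` is a main eigenvalue of multiplicity
at least `r - 1`. -/
theorem stmt0 {n r t : ℕ} (hr : 2 ≤ r) (hrn : r ≤ n) (ht1 : 1 ≤ t) (htr : t ≤ r - 1)
    (G : SimpleGraph (Fin n)) [DecidableRel G.Adj]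
    (hnbr : ∀ i j : Fin n, (i : ℕ) < r → (j : ℕ) < r →
      ({u | G.Adj i u ∨ u = i} : Set (Fin n)) = {u | G.Adj j u ∨ u = j})
    (B : Matrix (Fin n) (Fin n) ℝ)
    (hB : B = switchMatrix (Finset.univ.filter (fun v : Fin n => (v : ℕ) < t))
      (G.adjMatrix ℝ))
    (w : Fin (r - 1) → (Fin n → ℝ))
    (hw : ∀ k : Fin (r - 1), w k = if (k : ℕ) < t then stdVec n k + stdVec n t
      else stdVec n 0 + stdVec n ((k : ℕ) + 1)) :
    LinearIndependent ℝ w ∧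
    (∀ k, B.mulVec (w k) = (-1 : ℝ) • w k) ∧
    (∀ k, ∑ j, w k j ≠ 0) ∧
    r - 1 ≤ Module.finrank ℝ (Module.End.eigenspace (Matrix.toLin' B) (-1)) :=
  stmt0_general hrn ht1 htr G hnbr B hB w hw
end

section
/- Let n ≥ r+3 and r ≥ 1. The eigenvalues of the adjacency matrix of S_{n,r} are: 0 with multiplicity r−1, −1 with multiplicity n−r−2, and the three distinct real roots λ_1, λ_2, λ_3 of the cubic equation λ³ − (n−r−2)λ² − (n−1)λ + r(n−r−2) = 0, each of these three roots being a simple eigenvalue. -/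
open Matrix

/-- `sGraph n r` is the graph `S_{n,r}` obtained from the complete graph `K_{n-r}` by
attaching `r` pendant edges at one of its vertices.  The pendant vertices are
`0, …, r-1` (i.e. `v_1, …, v_r`), the vertex of degree `n-1` is `r` (i.e. `v_{r+1}`),
and the remaining clique vertices are `r+1, …, n-1` (i.e. `v_{r+2}, …, v_n`). -/
def sGraph (n r : ℕ) : SimpleGraph (Fin n) where
  Adj i j := i ≠ j ∧ ((i : ℕ) = r ∨ (j : ℕ) = r ∨ (r < (i : ℕ) ∧ r < (j : ℕ)))
  symm := by
    constructor
    intro i j h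
    exact ⟨h.1.symm, by tauto⟩
  loopless := by
    constructor
    intro i h
    exact h.1 rfl

instance sGraphDecidable (n r : ℕ) : DecidableRel (sGraph n r).Adj :=
  fun _ _ => inferInstanceAs (Decidable (_ ∧ _))

open Finset Module Module.End

/-!
Write `c` for the hub vertex `v_{r+1}`, `P` for the pendant vertices and `Q` for the other
`m = n - r - 1` clique vertices. A vector `x` is an eigenvector for `μ` iff `x c = μ x i` on `P`,
`x c + ∑_Q x - x i = μ x i` on `Q`, and `∑ x - x c = μ x c` at the hub. For `μ = 0` these say
that `x` vanishes off `P` and has total sum zero, for `μ = -1` that it vanishes off `Q` and has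
total sum zero: hyperplanes of dimension `r - 1` and `m - 1`. For any other `μ`, `x` vanishes as
soon as `x c` does, and summing the equations over `P` and `Q` gives `p(μ) * x c = 0` for the
cubic `p`; so the remaining eigenvalues are roots of `p`, each with a one-dimensional eigenspace.
The signs `p(-1) > 0`, `p(0) > 0`, `p(n - r - 2) < 0` separate the three real roots.
-/

section ZeroSum

variable (K : Type*) {ι : Type*} [Field K] [Fintype ι]

def restrictComplSum (s : Finset ι) : (ι → K) →ₗ[K] ({i // i ∉ s} → K) × K :=
  (LinearMap.funLeft K K Subtype.val).prod (∑ i, LinearMap.proj (R := K) (φ := fun _ => K) i)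

variable {K}

theorem restrictComplSum_apply (s : Finset ι) (x : ι → K) :
    restrictComplSum K s x = (fun i : {i // i ∉ s} => x i, ∑ i, x i) :=
  Prod.ext rfl (by simp [restrictComplSum])

theorem mem_ker_restrictComplSum {s : Finset ι} {x : ι → K} :
    x ∈ LinearMap.ker (restrictComplSum K s) ↔ (∀ i ∉ s, x i = 0) ∧ ∑ i, x i = 0 := by
  simp [restrictComplSum_apply, funext_iff]

theorem restrictComplSum_surjective {s : Finset ι} (hs : s.Nonempty) :
    Function.Surjective (restrictComplSum K s) := by
  classical
  obtain ⟨i₀, hi₀⟩ := hs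
  rintro ⟨y, t⟩
  let z : ι → K := fun i => if h : i ∈ s then 0 else y ⟨i, h⟩
  have hz : ∑ i, z i = ∑ j, y j := by
    rw [← Fintype.sum_subtype_add_sum_subtype (· ∈ s) z]
    simp only [z, dif_pos (Subtype.prop _), sum_const_zero, zero_add]
    exact sum_congr rfl fun j _ => dif_neg j.2
  refine ⟨z + (t - ∑ j, y j) • Pi.single i₀ 1, ?_⟩
  rw [restrictComplSum_apply, Prod.mk.injEq]
  constructor
  · ext ⟨i, hi⟩
    simp [z, hi, ne_of_mem_of_not_mem hi₀ hi |>.symm]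
  · simp [Finset.sum_add_distrib, hz, ← Finset.mul_sum]

theorem finrank_ker_restrictComplSum {s : Finset ι} (hs : s.Nonempty) :
    finrank K (LinearMap.ker (restrictComplSum K s)) = #s - 1 := by
  classical
  have h := (restrictComplSum K s).finrank_range_add_finrank_ker
  rw [LinearMap.range_eq_top.2 (restrictComplSum_surjective hs), finrank_top, finrank_prod,
    finrank_fintype_fun_eq_card, finrank_self, finrank_fintype_fun_eq_card,
    Fintype.card_subtype_compl, Fintype.card_coe] at h
  have := s.card_le_univ
  have := hs.card_pos
  omega

end ZeroSum

theorem eq_or_eq_or_eq_of_cubic {R : Type*} [CommRing R] [NoZeroDivisors R]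
    {a b c l₁ l₂ l₃ x : R}
    (h₁₂ : l₁ ≠ l₂) (h₁₃ : l₁ ≠ l₃) (h₂₃ : l₂ ≠ l₃)
    (e₁ : l₁ ^ 3 - a * l₁ ^ 2 - b * l₁ + c = 0)
    (e₂ : l₂ ^ 3 - a * l₂ ^ 2 - b * l₂ + c = 0)
    (e₃ : l₃ ^ 3 - a * l₃ ^ 2 - b * l₃ + c = 0) (ex : x ^ 3 - a * x ^ 2 - b * x + c = 0) :
    x = l₁ ∨ x = l₂ ∨ x = l₃ := by
  have q₁₂ : l₁ ^ 2 + l₁ * l₂ + l₂ ^ 2 - a * (l₁ + l₂) - b = 0 :=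
    (mul_eq_zero.1 (by linear_combination e₁ - e₂)).resolve_left (sub_ne_zero.2 h₁₂)
  have q₁₃ : l₁ ^ 2 + l₁ * l₃ + l₃ ^ 2 - a * (l₁ + l₃) - b = 0 :=
    (mul_eq_zero.1 (by linear_combination e₁ - e₃)).resolve_left (sub_ne_zero.2 h₁₃)
  have ha : l₁ + l₂ + l₃ - a = 0 :=
    (mul_eq_zero.1 (by linear_combination q₁₂ - q₁₃)).resolve_left (sub_ne_zero.2 h₂₃)
  have hb : b = -(l₁ * l₂ + l₁ * l₃ + l₂ * l₃) := by
    linear_combination -q₁₂ + (l₁ + l₂) * ha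
  have hc : c = -(l₁ * l₂ * l₃) := by linear_combination e₁ - l₁ ^ 2 * ha + l₁ * hb
  have key : (x - l₁) * (x - l₂) * (x - l₃) = 0 := by
    linear_combination ex - x ^ 2 * ha + x * hb - hc
  simpa [sub_eq_zero, or_assoc] using key

def sCubic (n r : ℕ) (x : ℝ) : ℝ :=
  x ^ 3 - ((n : ℝ) - r - 2) * x ^ 2 - ((n : ℝ) - 1) * x + r * ((n : ℝ) - r - 2)

section Cubic

variable {n r : ℕ} (hr : 1 ≤ r) (hn : r + 3 ≤ n)
include hr hn

theorem sCubic_neg_one_pos : 0 < sCubic n r (-1) := by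
  have : (1 : ℝ) ≤ r := by exact_mod_cast hr
  have : (r : ℝ) + 3 ≤ n := by exact_mod_cast hn
  unfold sCubic; nlinarith

theorem sCubic_zero_pos : 0 < sCubic n r 0 := by
  have : (1 : ℝ) ≤ r := by exact_mod_cast hr
  have : (r : ℝ) + 3 ≤ n := by exact_mod_cast hn
  unfold sCubic; nlinarith

theorem sCubic_sub_two_neg : sCubic n r (n - r - 2) < 0 := by
  have : (1 : ℝ) ≤ r := by exact_mod_cast hr
  have : (r : ℝ) + 3 ≤ n := by exact_mod_cast hn
  unfold sCubic; nlinarith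

theorem exists_sCubic_roots :
    ∃ lam : Fin 3 → ℝ, Function.Injective lam ∧ (∀ i, sCubic n r (lam i) = 0) ∧
      ∀ x, sCubic n r x = 0 → ∃ i, x = lam i := by
  have : (1 : ℝ) ≤ r := by exact_mod_cast hr
  have : (r : ℝ) + 3 ≤ n := by exact_mod_cast hn
  have hcont : Continuous (sCubic n r) := by unfold sCubic; fun_prop
  have hlow : sCubic n r (-n) < 0 := by unfold sCubic; nlinarith
  have hhigh : 0 < sCubic n r n := by unfold sCubic; nlinarith
  obtain ⟨l₁, ⟨-, hl₁⟩, e₁⟩ := intermediate_value_Ioo (by linarith) hcont.continuousOn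
    ⟨hlow, sCubic_neg_one_pos hr hn⟩
  obtain ⟨l₂, ⟨hl₂, hl₂'⟩, e₂⟩ := intermediate_value_Ioo' (by linarith)
    hcont.continuousOn ⟨sCubic_sub_two_neg hr hn, sCubic_zero_pos hr hn⟩
  obtain ⟨l₃, ⟨hl₃, -⟩, e₃⟩ := intermediate_value_Ioo (by linarith) hcont.continuousOn
    ⟨sCubic_sub_two_neg hr hn, hhigh⟩
  refine ⟨![l₁, l₂, l₃], ?_, fun i => by fin_cases i <;> assumption, fun x hx => ?_⟩
  · refine (Fin.strictMono_iff_lt_succ.2 fun i => ?_).injective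
    fin_cases i <;> simp <;> linarith
  · rcases eq_or_eq_or_eq_of_cubic (by linarith) (by linarith) (by linarith) e₁ e₂ e₃ hx
      with rfl | rfl | rfl
    exacts [⟨0, rfl⟩, ⟨1, rfl⟩, ⟨2, rfl⟩]

end Cubic

section SGraph

variable {n r : ℕ}

theorem sGraph_adj {i j : Fin n} :
    (sGraph n r).Adj i j ↔
      i ≠ j ∧ ((i : ℕ) = r ∨ (j : ℕ) = r ∨ (r < (i : ℕ) ∧ r < (j : ℕ))) :=
  Iff.rfl

def pendants (n r : ℕ) : Finset (Fin n) := univ.filter fun i => (i : ℕ) < r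

def cliqueRest (n r : ℕ) : Finset (Fin n) := univ.filter fun i => r < (i : ℕ)

theorem card_pendants (h : r ≤ n) : #(pendants n r) = r := by
  rw [pendants, Fin.card_filter_val_lt, min_eq_right h]

theorem card_cliqueRest : #(cliqueRest n r) = n - r - 1 := by
  have hsplit := card_filter_add_card_filter_not (s := univ) fun i : Fin n => (i : ℕ) < r + 1
  simp only [Fin.card_filter_val_lt, not_lt, Nat.succ_le_iff, card_univ, Fintype.card_fin] at hsplit
  rw [cliqueRest]
  omega

theorem cast_card_cliqueRest (h : r < n) : (#(cliqueRest n r) : ℝ) = n - r - 1 := by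
  rw [card_cliqueRest, Nat.cast_sub (by omega), Nat.cast_sub h.le, Nat.cast_one]

noncomputable def rootVec (n r : ℕ) (μ : ℝ) : Fin n → ℝ :=
  fun i => if (i : ℕ) < r then μ⁻¹ else if (i : ℕ) = r then 1 else (μ - (n - r - 2))⁻¹

variable {c : Fin n} (hc : (c : ℕ) = r)
include hc

theorem sum_eq_pendants_add_hub_add_cliqueRest (x : Fin n → ℝ) :
    ∑ i, x i = ∑ i ∈ pendants n r, x i + x c + ∑ i ∈ cliqueRest n r, x i := by
  have hrest : univ.filter (fun i : Fin n => ¬ (i : ℕ) < r) = insert c (cliqueRest n r) := by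
    ext j; simp [cliqueRest, Fin.ext_iff]; omega
  rw [← sum_filter_add_sum_filter_not univ (fun i : Fin n => (i : ℕ) < r), hrest,
    sum_insert (by simp [cliqueRest, hc]), pendants, add_assoc]

theorem sGraph_neighborFinset_of_lt {i : Fin n} (hi : (i : ℕ) < r) :
    (sGraph n r).neighborFinset i = {c} := by
  ext j; simp [sGraph_adj, Fin.ext_iff]; omega

theorem sGraph_neighborFinset_hub : (sGraph n r).neighborFinset c = univ.erase c := by
  ext j; simp [sGraph_adj, Fin.ext_iff]; omega

theorem sGraph_neighborFinset_of_gt {i : Fin n} (hi : r < (i : ℕ)) :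
    (sGraph n r).neighborFinset i = insert c ((cliqueRest n r).erase i) := by
  ext j; simp [sGraph_adj, cliqueRest, Fin.ext_iff]; omega

theorem sGraph_mulVec_of_lt (x : Fin n → ℝ) {i : Fin n} (hi : (i : ℕ) < r) :
    ((sGraph n r).adjMatrix ℝ *ᵥ x) i = x c := by
  rw [SimpleGraph.adjMatrix_mulVec_apply, sGraph_neighborFinset_of_lt hc hi, sum_singleton]

theorem sGraph_mulVec_hub (x : Fin n → ℝ) :
    ((sGraph n r).adjMatrix ℝ *ᵥ x) c = ∑ i, x i - x c := by
  rw [SimpleGraph.adjMatrix_mulVec_apply, sGraph_neighborFinset_hub hc,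
    sum_erase_eq_sub (mem_univ c)]

theorem sGraph_mulVec_of_gt (x : Fin n → ℝ) {i : Fin n} (hi : r < (i : ℕ)) :
    ((sGraph n r).adjMatrix ℝ *ᵥ x) i = x c + ∑ j ∈ cliqueRest n r, x j - x i := by
  rw [SimpleGraph.adjMatrix_mulVec_apply, sGraph_neighborFinset_of_gt hc hi,
    sum_insert (by simp [cliqueRest, hc]), sum_erase_eq_sub (by simpa [cliqueRest] using hi),
    add_sub_assoc]

theorem mem_eigenspace_sGraph_iff {μ : ℝ} {x : Fin n → ℝ} :
    x ∈ eigenspace (toLin' ((sGraph n r).adjMatrix ℝ)) μ ↔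
      (∀ i : Fin n, (i : ℕ) < r → x c = μ * x i) ∧
      ∑ i, x i - x c = μ * x c ∧
      ∀ i : Fin n, r < (i : ℕ) → x c + ∑ j ∈ cliqueRest n r, x j - x i = μ * x i := by
  rw [Module.End.mem_eigenspace_iff, toLin'_apply, funext_iff]
  constructor
  · intro h
    exact ⟨fun i hi => (sGraph_mulVec_of_lt hc x hi).symm.trans (h i),
      (sGraph_mulVec_hub hc x).symm.trans (h c),
      fun i hi => (sGraph_mulVec_of_gt hc x hi).symm.trans (h i)⟩
  · rintro ⟨hpend, hhub, hrest⟩ i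
    rcases lt_trichotomy (i : ℕ) r with hi | hi | hi
    · exact (sGraph_mulVec_of_lt hc x hi).trans (hpend i hi)
    · obtain rfl : i = c := Fin.ext (hi.trans hc.symm)
      exact (sGraph_mulVec_hub hc x).trans hhub
    · exact (sGraph_mulVec_of_gt hc x hi).trans (hrest i hi)

theorem pendants_sum_of_mem_eigenspace {μ : ℝ} {x : Fin n → ℝ}
    (hx : x ∈ eigenspace (toLin' ((sGraph n r).adjMatrix ℝ)) μ) :
    r * x c = μ * ∑ i ∈ pendants n r, x i := by
  have hpend := ((mem_eigenspace_sGraph_iff hc).1 hx).1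
  calc (r : ℝ) * x c = ∑ _i ∈ pendants n r, x c := by
        rw [sum_const, card_pendants (hc ▸ c.isLt.le), nsmul_eq_mul]
    _ = ∑ i ∈ pendants n r, μ * x i :=
        sum_congr rfl fun i hi => hpend i (by simpa [pendants] using hi)
    _ = μ * ∑ i ∈ pendants n r, x i := (mul_sum _ _ _).symm

theorem cliqueRest_sum_of_mem_eigenspace {μ : ℝ} {x : Fin n → ℝ}
    (hx : x ∈ eigenspace (toLin' ((sGraph n r).adjMatrix ℝ)) μ) :
    (μ + 1) * ∑ i ∈ cliqueRest n r, x i =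
      (n - r - 1) * (x c + ∑ i ∈ cliqueRest n r, x i) := by
  have hrest := ((mem_eigenspace_sGraph_iff hc).1 hx).2.2
  calc (μ + 1) * ∑ i ∈ cliqueRest n r, x i = ∑ i ∈ cliqueRest n r, (μ + 1) * x i :=
        mul_sum _ _ _
    _ = ∑ _i ∈ cliqueRest n r, (x c + ∑ j ∈ cliqueRest n r, x j) :=
        sum_congr rfl fun i hi => by
          linarith [hrest i (by simpa [cliqueRest] using hi)]
    _ = (n - r - 1) * (x c + ∑ i ∈ cliqueRest n r, x i) := by
        rw [sum_const, nsmul_eq_mul, cast_card_cliqueRest (hc ▸ c.isLt)]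

theorem sCubic_mul_hub_eq_zero {μ : ℝ} {x : Fin n → ℝ}
    (hx : x ∈ eigenspace (toLin' ((sGraph n r).adjMatrix ℝ)) μ) : sCubic n r μ * x c = 0 := by
  have hhub := ((mem_eigenspace_sGraph_iff hc).1 hx).2.1
  rw [sum_eq_pendants_add_hub_add_cliqueRest hc] at hhub
  unfold sCubic
  linear_combination μ * cliqueRest_sum_of_mem_eigenspace hc hx
    - (μ - (n - r - 2)) * (pendants_sum_of_mem_eigenspace hc hx + μ * hhub)

theorem eq_zero_of_mem_eigenspace_of_hub_eq_zero {μ : ℝ} (hμ0 : μ ≠ 0) (hμ1 : μ ≠ -1)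
    {x : Fin n → ℝ} (hx : x ∈ eigenspace (toLin' ((sGraph n r).adjMatrix ℝ)) μ)
    (hxc : x c = 0) :
    x = 0 := by
  obtain ⟨hpend, hhub, hrest⟩ := (mem_eigenspace_sGraph_iff hc).1 hx
  have hpend0 : ∀ i : Fin n, (i : ℕ) < r → x i = 0 := fun i hi =>
    (mul_eq_zero.1 ((hpend i hi).symm.trans hxc)).resolve_left hμ0
  have hT : ∑ i ∈ cliqueRest n r, x i = 0 := by
    rw [sum_eq_pendants_add_hub_add_cliqueRest hc,
      sum_eq_zero fun i hi => hpend0 i (by simpa [pendants] using hi), hxc] at hhub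
    simpa using hhub
  funext i
  rcases lt_trichotomy (i : ℕ) r with hi | hi | hi
  · exact hpend0 i hi
  · rwa [Fin.ext (hi.trans hc.symm)]
  · have := hrest i hi
    rw [hxc, hT] at this
    exact (mul_eq_zero.1 (by linear_combination -this : (μ + 1) * x i = 0)).resolve_left
      (by contrapose! hμ1; linarith)

theorem eigenspace_sGraph_zero (hr : 1 ≤ r) (hn : r + 3 ≤ n) :
    eigenspace (toLin' ((sGraph n r).adjMatrix ℝ)) 0 =
      LinearMap.ker (restrictComplSum ℝ (pendants n r)) := by
  ext x
  rw [mem_ker_restrictComplSum]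
  have hsum := sum_eq_pendants_add_hub_add_cliqueRest hc x
  have hnot_pend : ∀ i : Fin n, i ∉ pendants n r ↔ r ≤ (i : ℕ) := by simp [pendants]
  constructor
  · intro hx
    obtain ⟨hpend, hhub, hrest⟩ := (mem_eigenspace_sGraph_iff hc).1 hx
    have hxc : x c = 0 := by simpa using hpend ⟨0, by omega⟩ (by simp; omega)
    have hT : ∑ i ∈ cliqueRest n r, x i = 0 := by
      have h := cliqueRest_sum_of_mem_eigenspace hc hx
      have hm : (n : ℝ) - r - 2 ≠ 0 := by
        have : (r : ℝ) + 3 ≤ n := by exact_mod_cast hn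
        linarith
      rw [hxc] at h
      exact (mul_eq_zero.1 (by linear_combination -h : ((n : ℝ) - r - 2) * _ = 0)).resolve_left hm
    refine ⟨fun i hi => ?_, by linear_combination hhub + hxc⟩
    rcases ((hnot_pend i).1 hi).eq_or_lt with hi | hi
    · rwa [Fin.ext (hi.symm.trans hc.symm)]
    · linear_combination -(hrest i hi) + hxc + hT
  · rintro ⟨hzero, hsum0⟩
    have hxc : x c = 0 := hzero c ((hnot_pend c).2 hc.ge)
    have hrest0 : ∀ i : Fin n, r < (i : ℕ) → x i = 0 := fun i hi =>
      hzero i ((hnot_pend i).2 hi.le)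
    have hT : ∑ i ∈ cliqueRest n r, x i = 0 :=
      sum_eq_zero fun i hi => hrest0 i (by simpa [cliqueRest] using hi)
    rw [mem_eigenspace_sGraph_iff hc]
    refine ⟨fun i _ => by simp [hxc], by simp [hsum0, hxc], fun i hi => ?_⟩
    rw [hxc, hT, hrest0 i hi]
    ring

theorem eigenspace_sGraph_neg_one (hr : 1 ≤ r) (hn : r + 2 ≤ n) :
    eigenspace (toLin' ((sGraph n r).adjMatrix ℝ)) (-1) =
      LinearMap.ker (restrictComplSum ℝ (cliqueRest n r)) := by
  ext x
  rw [mem_ker_restrictComplSum]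
  have hsum := sum_eq_pendants_add_hub_add_cliqueRest hc x
  have hnot_rest : ∀ i : Fin n, i ∉ cliqueRest n r ↔ (i : ℕ) ≤ r := by simp [cliqueRest]
  constructor
  · intro hx
    obtain ⟨hpend, hhub, hrest⟩ := (mem_eigenspace_sGraph_iff hc).1 hx
    have hP := pendants_sum_of_mem_eigenspace hc hx
    have hxc : x c = 0 := by
      have hT := hrest ⟨r + 1, by omega⟩ (by simp)
      have : (r : ℝ) * x c = 0 := by linear_combination hP + hsum + hT - hhub
      exact (mul_eq_zero.1 this).resolve_left (by positivity)
    refine ⟨fun i hi => ?_, by linear_combination hhub⟩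
    rcases ((hnot_rest i).1 hi).lt_or_eq with hi | hi
    · linear_combination hpend i hi - hxc
    · rwa [Fin.ext (hi.trans hc.symm)]
  · rintro ⟨hzero, hsum0⟩
    have hxc : x c = 0 := hzero c ((hnot_rest c).2 hc.le)
    have hP : ∑ i ∈ pendants n r, x i = 0 :=
      sum_eq_zero fun i hi => hzero i ((hnot_rest i).2 (by simp [pendants] at hi; omega))
    rw [mem_eigenspace_sGraph_iff hc]
    refine ⟨fun i hi => ?_, by simp [hsum0, hxc], fun i _ => ?_⟩
    · rw [hxc, hzero i ((hnot_rest i).2 hi.le)]; ring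
    · rw [hxc]; linear_combination hsum0 - hsum - hP - hxc

theorem rootVec_mem_eigenspace {μ : ℝ} (hμ0 : μ ≠ 0) (hμM : μ ≠ n - r - 2)
    (hμ : sCubic n r μ = 0) :
    rootVec n r μ ∈ eigenspace (toLin' ((sGraph n r).adjMatrix ℝ)) μ := by
  have hvc : rootVec n r μ c = 1 := by simp [rootVec, hc]
  have hP : ∑ i ∈ pendants n r, rootVec n r μ i = r * μ⁻¹ := by
    have hlt : ∀ i ∈ pendants n r, rootVec n r μ i = μ⁻¹ := fun i hi =>
      if_pos (by simpa [pendants] using hi)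
    rw [sum_congr rfl hlt, sum_const, card_pendants (hc ▸ c.isLt.le), nsmul_eq_mul]
  have hT : ∑ i ∈ cliqueRest n r, rootVec n r μ i = (n - r - 1) * (μ - (n - r - 2))⁻¹ := by
    have hgt : ∀ i ∈ cliqueRest n r, rootVec n r μ i = (μ - (n - r - 2))⁻¹ := by
      intro i hi
      have : r < (i : ℕ) := by simpa [cliqueRest] using hi
      simp [rootVec, this.not_gt, this.ne']
    rw [sum_congr rfl hgt, sum_const, nsmul_eq_mul, cast_card_cliqueRest (hc ▸ c.isLt)]
  rw [mem_eigenspace_sGraph_iff hc, sum_eq_pendants_add_hub_add_cliqueRest hc, hvc, hP, hT]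
  refine ⟨fun i hi => ?_, ?_, fun i hi => ?_⟩
  · rw [rootVec, if_pos hi, mul_inv_cancel₀ hμ0]
  · unfold sCubic at hμ
    field_simp
    linear_combination -hμ
  · simp only [rootVec, hi.not_gt, hi.ne', if_false]
    field_simp
    ring

end SGraph

section Eigenspaces

variable {n r : ℕ} (hr : 1 ≤ r) (hn : r + 3 ≤ n)
include hr hn

theorem finrank_eigenspace_sGraph_zero :
    finrank ℝ (eigenspace (toLin' ((sGraph n r).adjMatrix ℝ)) 0) = r - 1 := by
  rw [eigenspace_sGraph_zero (c := ⟨r, by omega⟩) (r := r) rfl hr hn,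
    finrank_ker_restrictComplSum ⟨⟨0, by omega⟩, by simp [pendants]; omega⟩,
    card_pendants (by omega)]

theorem finrank_eigenspace_sGraph_neg_one :
    finrank ℝ (eigenspace (toLin' ((sGraph n r).adjMatrix ℝ)) (-1)) = n - r - 2 := by
  rw [eigenspace_sGraph_neg_one (c := ⟨r, by omega⟩) (r := r) rfl hr (by omega),
    finrank_ker_restrictComplSum ⟨⟨r + 1, by omega⟩, by simp [cliqueRest]⟩, card_cliqueRest]
  omega

theorem finrank_eigenspace_sGraph_of_sCubic_eq_zero {μ : ℝ} (hμ : sCubic n r μ = 0) :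
    finrank ℝ (eigenspace (toLin' ((sGraph n r).adjMatrix ℝ)) μ) = 1 := by
  let c : Fin n := ⟨r, by omega⟩
  have hc : (c : ℕ) = r := rfl
  have hμ0 : μ ≠ 0 := by rintro rfl; exact (sCubic_zero_pos hr hn).ne' hμ
  have hμ1 : μ ≠ -1 := by rintro rfl; exact (sCubic_neg_one_pos hr hn).ne' hμ
  have hμM : μ ≠ n - r - 2 := by rintro rfl; exact (sCubic_sub_two_neg hr hn).ne hμ
  refine le_antisymm ?_ (Submodule.one_le_finrank_iff.2 ?_)
  · have hinj : Function.Injective ((LinearMap.proj c).comp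
        (eigenspace (toLin' ((sGraph n r).adjMatrix ℝ)) μ).subtype) := by
      rw [← LinearMap.ker_eq_bot, LinearMap.ker_eq_bot']
      rintro ⟨x, hx⟩ hxc
      exact Subtype.ext (eq_zero_of_mem_eigenspace_of_hub_eq_zero hc hμ0 hμ1 hx hxc)
    simpa using LinearMap.finrank_le_finrank_of_injective hinj
  · refine (Submodule.ne_bot_iff _).2 ⟨_, rootVec_mem_eigenspace hc hμ0 hμM hμ, fun h => ?_⟩
    simpa [rootVec, hc] using congrFun h c

end Eigenspaces

theorem eq_zero_or_eq_neg_one_or_sCubic_eq_zero {n r : ℕ} (h : r < n) {μ : ℝ}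
    (hμ : HasEigenvalue (toLin' ((sGraph n r).adjMatrix ℝ)) μ) :
    μ = 0 ∨ μ = -1 ∨ sCubic n r μ = 0 := by
  obtain ⟨x, hx, hx0⟩ := hμ.exists_hasEigenvector
  by_cases hμ0 : μ = 0
  · exact .inl hμ0
  by_cases hμ1 : μ = -1
  · exact .inr (.inl hμ1)
  have hc : ((⟨r, h⟩ : Fin n) : ℕ) = r := rfl
  have hxc : x ⟨r, h⟩ ≠ 0 := fun hxc =>
    hx0 (eq_zero_of_mem_eigenspace_of_hub_eq_zero hc hμ0 hμ1 hx hxc)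
  exact .inr (.inr ((mul_eq_zero.1 (sCubic_mul_hub_eq_zero hc hx)).resolve_right hxc))

/-- For `n ≥ r + 3` and `r ≥ 1` the eigenvalues of the adjacency matrix of
`S_{n,r}` are `0` with multiplicity `r - 1`, `-1` with multiplicity `n - r - 2`, and the
three distinct real roots of `λ³ - (n-r-2)λ² - (n-1)λ + r(n-r-2) = 0`, each simple. -/
theorem stmt2 {n r : ℕ} (hr : 1 ≤ r) (hn : r + 3 ≤ n) :
    ∃ lam : Fin 3 → ℝ, Function.Injective lam ∧
      (∀ i, (lam i) ^ 3 - ((n : ℝ) - r - 2) * (lam i) ^ 2 - ((n : ℝ) - 1) * lam i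
        + r * ((n : ℝ) - r - 2) = 0) ∧
      (∀ x : ℝ, x ^ 3 - ((n : ℝ) - r - 2) * x ^ 2 - ((n : ℝ) - 1) * x
        + r * ((n : ℝ) - r - 2) = 0 → ∃ i, x = lam i) ∧
      Module.finrank ℝ
        (Module.End.eigenspace (Matrix.toLin' ((sGraph n r).adjMatrix ℝ)) 0) = r - 1 ∧
      Module.finrank ℝ
        (Module.End.eigenspace (Matrix.toLin' ((sGraph n r).adjMatrix ℝ)) (-1)) = n - r - 2 ∧
      (∀ i, Module.finrank ℝ
        (Module.End.eigenspace (Matrix.toLin' ((sGraph n r).adjMatrix ℝ)) (lam i)) = 1) ∧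
      (∀ μ : ℝ, Module.End.HasEigenvalue (Matrix.toLin' ((sGraph n r).adjMatrix ℝ)) μ →
        μ = 0 ∨ μ = -1 ∨ ∃ i, μ = lam i) := by
  obtain ⟨lam, hinj, hroot, hall⟩ := exists_sCubic_roots hr hn
  refine ⟨lam, hinj, hroot, hall, finrank_eigenspace_sGraph_zero hr hn,
    finrank_eigenspace_sGraph_neg_one hr hn,
    fun i => finrank_eigenspace_sGraph_of_sCubic_eq_zero hr hn (hroot i), fun μ hμ => ?_⟩
  exact (eq_zero_or_eq_neg_one_or_sCubic_eq_zero (by omega) hμ).imp_right (Or.imp_right (hall μ))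
end

section
/- Let n ≥ r+3 and r ≥ 1, and let λ be an eigenvalue of the adjacency matrix of S_{n,r} with λ ∉ {0, −1}. Then λ has an eigenvector x ∈ ℝ^n with entries x_i = 1 for 1 ≤ i ≤ r (the pendant vertices), x_{r+1} = λ (the vertex of degree n−1), and x_i = λ − r/(λ+1) for r+2 ≤ i ≤ n (the vertices of degree n−r−1). -/
/-!
An eigenvector `v` for `λ ∉ {0, -1}` is determined by its hub entry `t = v_{r+1}`: each pendant
row reads `λ v_i = t`, each clique row reads `(λ + 1) v_i = t + S` with `S` the sum over the clique
vertices other than the hub, and the hub row reads `λ t = r t / λ + S`. Solving, `v = (t / λ) • x`,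
and `t ≠ 0` because `v ≠ 0`; so `x`, a nonzero multiple of `v`, is an eigenvector as well.
-/

open Matrix

namespace sGraph

open Finset

variable {n r : ℕ}

noncomputable def eigenvector (n r : ℕ) (lam : ℝ) : Fin n → ℝ :=
  fun i => if (i : ℕ) < r then 1 else if (i : ℕ) = r then lam else lam - r / (lam + 1)

theorem adj_iff {i j : Fin n} :
    (sGraph n r).Adj i j ↔
      (i : ℕ) ≠ j ∧ ((i : ℕ) = r ∨ (j : ℕ) = r ∨ r < (i : ℕ) ∧ r < (j : ℕ)) := by
  rw [Fin.val_ne_iff]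
  rfl

section Neighbors

variable (hrn : r < n)

theorem neighborFinset_of_lt {i : Fin n} (hi : (i : ℕ) < r) :
    (sGraph n r).neighborFinset i = {⟨r, hrn⟩} := by
  ext j
  simp only [SimpleGraph.mem_neighborFinset, adj_iff, mem_singleton, Fin.ext_iff]
  omega

theorem neighborFinset_hub :
    (sGraph n r).neighborFinset ⟨r, hrn⟩ = Iio ⟨r, hrn⟩ ∪ Ioi ⟨r, hrn⟩ := by
  ext j
  simp only [SimpleGraph.mem_neighborFinset, adj_iff, mem_union, mem_Iio, mem_Ioi,
    Fin.lt_def, true_or, and_true]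
  omega

theorem neighborFinset_of_gt {i : Fin n} (hi : r < (i : ℕ)) :
    (sGraph n r).neighborFinset i = insert ⟨r, hrn⟩ ((Ioi ⟨r, hrn⟩).erase i) := by
  ext j
  simp only [SimpleGraph.mem_neighborFinset, adj_iff, mem_insert, mem_erase, mem_Ioi,
    Fin.lt_def, Fin.ext_iff]
  omega

theorem adjMatrix_mulVec_of_lt (v : Fin n → ℝ) {i : Fin n} (hi : (i : ℕ) < r) :
    ((sGraph n r).adjMatrix ℝ *ᵥ v) i = v ⟨r, hrn⟩ := by
  rw [SimpleGraph.adjMatrix_mulVec_apply, neighborFinset_of_lt hrn hi, sum_singleton]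

theorem adjMatrix_mulVec_hub (v : Fin n → ℝ) :
    ((sGraph n r).adjMatrix ℝ *ᵥ v) ⟨r, hrn⟩
      = ∑ j ∈ Iio ⟨r, hrn⟩, v j + ∑ j ∈ Ioi ⟨r, hrn⟩, v j := by
  rw [SimpleGraph.adjMatrix_mulVec_apply, neighborFinset_hub hrn, sum_union]
  exact disjoint_left.2 fun j hlt hgt => lt_asymm (mem_Iio.1 hlt) (mem_Ioi.1 hgt)

theorem adjMatrix_mulVec_of_gt (v : Fin n → ℝ) {i : Fin n} (hi : r < (i : ℕ)) :
    ((sGraph n r).adjMatrix ℝ *ᵥ v) i = v ⟨r, hrn⟩ + (∑ j ∈ Ioi ⟨r, hrn⟩, v j - v i) := by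
  rw [SimpleGraph.adjMatrix_mulVec_apply, neighborFinset_of_gt hrn hi, sum_insert,
    sum_erase_eq_sub]
  · simpa [Fin.lt_def] using hi
  · simp

end Neighbors

theorem eigenvector_hub (hrn : r < n) (lam : ℝ) : eigenvector n r lam ⟨r, hrn⟩ = lam := by
  simp [eigenvector]

theorem eq_smul_eigenvector_of_mulVec_eq (hrn : r < n) {lam : ℝ} (h0 : lam ≠ 0)
    (h1 : lam + 1 ≠ 0) {v : Fin n → ℝ} (hv : (sGraph n r).adjMatrix ℝ *ᵥ v = lam • v) :
    v = (v ⟨r, hrn⟩ / lam) • eigenvector n r lam := by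
  set t := v ⟨r, hrn⟩
  set S := ∑ j ∈ Ioi ⟨r, hrn⟩, v j
  have row (i : Fin n) : ((sGraph n r).adjMatrix ℝ *ᵥ v) i = lam * v i := congrFun hv i
  have pendant (i : Fin n) (hi : (i : ℕ) < r) : v i = t / lam := by
    rw [eq_div_iff h0, mul_comm, ← row i, adjMatrix_mulVec_of_lt hrn v hi]
  have hub : lam * t = r * (t / lam) + S := by
    rw [← row, adjMatrix_mulVec_hub hrn v,
      sum_congr rfl fun j hj => pendant j (Fin.lt_def.1 (mem_Iio.1 hj)), sum_const, Fin.card_Iio,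
      nsmul_eq_mul]
  have clique (i : Fin n) (hi : r < (i : ℕ)) : (lam + 1) * v i = t + S := by
    linear_combination adjMatrix_mulVec_of_gt hrn v hi - row i
  ext i
  simp only [Pi.smul_apply, smul_eq_mul, eigenvector]
  rcases lt_trichotomy (i : ℕ) r with hi | hi | hi
  · rw [if_pos hi, pendant i hi, mul_one]
  · rw [if_neg hi.not_lt, if_pos hi, div_mul_cancel₀ _ h0, show i = ⟨r, hrn⟩ from Fin.ext hi]
  · rw [if_neg (by omega), if_neg hi.ne', ← mul_right_inj' h1, clique i hi,
      eq_sub_of_add_eq' hub.symm]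
    field_simp
    ring

end sGraph

open sGraph in
theorem stmt3_general {n r : ℕ} (hn : r + 3 ≤ n) (lam : ℝ)
    (hlam : ∃ v : Fin n → ℝ, v ≠ 0 ∧ ((sGraph n r).adjMatrix ℝ).mulVec v = lam • v)
    (h0 : lam ≠ 0) (h1 : lam ≠ -1) (x : Fin n → ℝ)
    (hx : x = fun i : Fin n => if (i : ℕ) < r then (1 : ℝ)
      else if (i : ℕ) = r then lam else lam - r / (lam + 1)) :
    x ≠ 0 ∧ ((sGraph n r).adjMatrix ℝ).mulVec x = lam • x := by
  obtain rfl : x = eigenvector n r lam := hx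
  obtain ⟨v, hv0, hv⟩ := hlam
  have hrn : r < n := by omega
  have hvx :=
    eq_smul_eigenvector_of_mulVec_eq hrn h0 (fun h => h1 (eq_neg_of_add_eq_zero_left h)) hv
  have hc : v ⟨r, hrn⟩ / lam ≠ 0 := fun hc => hv0 (by rw [hvx, hc, zero_smul])
  refine ⟨fun hx => h0 ?_, smul_right_injective _ hc ?_⟩
  · rw [← eigenvector_hub hrn lam, hx, Pi.zero_apply]
  · dsimp only
    rw [← mulVec_smul, ← hvx, hv, smul_comm, ← hvx]

/-- For `n ≥ r + 3`, `r ≥ 1`, every eigenvalue `λ ∉ {0, -1}` of the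
adjacency matrix of `S_{n,r}` has an eigenvector `x` whose entries are `1` on the pendant
vertices, `λ` on the vertex of degree `n - 1`, and `λ - r/(λ+1)` on the vertices of degree
`n - r - 1`. -/
theorem stmt3 {n r : ℕ} (hr : 1 ≤ r) (hn : r + 3 ≤ n) (lam : ℝ)
    (hlam : ∃ v : Fin n → ℝ, v ≠ 0 ∧ ((sGraph n r).adjMatrix ℝ).mulVec v = lam • v)
    (h0 : lam ≠ 0) (h1 : lam ≠ -1) (x : Fin n → ℝ)
    (hx : x = fun i : Fin n => if (i : ℕ) < r then (1 : ℝ)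
      else if (i : ℕ) = r then lam else lam - r / (lam + 1)) :
    x ≠ 0 ∧ ((sGraph n r).adjMatrix ℝ).mulVec x = lam • x :=
  stmt3_general hn lam hlam h0 h1 x hx
end

section
/- Let n and r be integers with r ≥ 1 and n ≥ r+3, and let f(x) = x³ − (n−r−2)x² − (n−1)x + r(n−r−2). Then f has exactly three real roots, they are pairwise distinct, and one lies in (−∞, 0), one lies in (0, √r), and one lies in (√r, +∞). -/
/-!
Writing `S = n - r - 2` and `T = n - 1`, the cubic is `f x = (x - S)(x² - r) - (T - r) x` with
`S > 0` and `T > r > 0`. Hence `f 0 = r S > 0` and `f √r = -(T - r) √r < 0`, while `f` is negative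
far to the left and positive far to the right, so the intermediate value theorem gives a root in
each of `(-∞, 0)`, `(0, √r)` and `(√r, ∞)`. A monic cubic with three distinct roots has no other.
-/

open Real

theorem eq_or_eq_or_eq_of_cubic_eq_zero {R : Type*} [CommRing R] [IsDomain R] {P : R → R} {p q s : R}
    (hP : ∀ x, P x = x ^ 3 + p * x ^ 2 + q * x + s) {a b c x : R}
    (hab : a ≠ b) (hac : a ≠ c) (hbc : b ≠ c)
    (ha : P a = 0) (hb : P b = 0) (hc : P c = 0) (hx : P x = 0) :
    x = a ∨ x = b ∨ x = c := by
  rw [hP] at ha hb hc hx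
  -- Lagrange interpolation: `(a-b)(a-c)(b-c) (P x - (x-a)(x-b)(x-c))` is a combination of
  -- `P a`, `P b`, `P c`.
  have hprod : ((a - b) * (a - c) * (b - c)) * ((x - a) * (x - b) * (x - c)) = 0 := by
    linear_combination (a - b) * (a - c) * (b - c) * hx - (b - c) * (x - b) * (x - c) * ha
      + (a - c) * (x - a) * (x - c) * hb - (a - b) * (x - a) * (x - b) * hc
  simpa [sub_eq_zero, hab, hac, hbc, or_assoc] using hprod

/-- The cubic of the theorem, with `S = n - r - 2` and `T = n - 1`. -/
def cubic (S T r x : ℝ) : ℝ := x ^ 3 - S * x ^ 2 - T * x + r * S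

namespace cubic

variable {S T r : ℝ}

theorem eq_mul_sub (x : ℝ) : cubic S T r x = (x - S) * (x ^ 2 - r) - (T - r) * x := by
  unfold cubic; ring

theorem continuous : Continuous (cubic S T r) := by
  unfold cubic; fun_prop

theorem zero_pos (hS : 0 < S) (hr : 0 < r) : 0 < cubic S T r 0 := by
  simp only [cubic]; nlinarith

theorem sqrt_neg (hr : 0 < r) (hrT : r < T) : cubic S T r √r < 0 := by
  rw [eq_mul_sub, sq_sqrt hr.le, sub_self, mul_zero, zero_sub, neg_neg_iff_pos]
  exact mul_pos (sub_pos.2 hrT) (sqrt_pos.2 hr)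

theorem neg_add_one_neg (hS : 0 ≤ S) (hr : 0 < r) (hrT : r < T) :
    cubic S T r (-(T + 1)) < 0 := by
  have hsq : r < (T + 1) ^ 2 := by nlinarith
  have hcube : T * (T + 1) < (T + 1) ^ 3 := by nlinarith
  simp only [cubic]
  nlinarith [mul_le_mul_of_nonneg_left hsq.le hS]

theorem add_add_one_pos (hS : 0 < S) (hr : 0 < r) (hT : 0 < T) :
    0 < cubic S T r (S + T + 1) := by
  have hx : cubic S T r (S + T + 1) = (S + T + 1) * ((T + 1) * (S + T + 1) - T) + r * S := by
    unfold cubic; ring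
  rw [hx]
  have : 0 < (T + 1) * (S + T + 1) - T := by nlinarith
  positivity

theorem exists_roots (hS : 0 < S) (hr : 0 < r) (hrT : r < T) :
    ∃ a b c : ℝ, a < 0 ∧ 0 < b ∧ b < √r ∧ √r < c ∧
      cubic S T r a = 0 ∧ cubic S T r b = 0 ∧ cubic S T r c = 0 := by
  have hT : 0 < T := hr.trans hrT
  have hsqrt : √r < S + T + 1 := by
    have : √r < r + 1 := by nlinarith [sq_sqrt hr.le, sqrt_nonneg r]
    linarith
  obtain ⟨a, ⟨-, ha⟩, hfa⟩ := intermediate_value_Ioo (by linarith) continuous.continuousOn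
    ⟨neg_add_one_neg hS.le hr hrT, zero_pos (T := T) hS hr⟩
  obtain ⟨b, ⟨hb₀, hb⟩, hfb⟩ := intermediate_value_Ioo' (sqrt_nonneg r) continuous.continuousOn
    ⟨sqrt_neg (S := S) hr hrT, zero_pos (T := T) hS hr⟩
  obtain ⟨c, ⟨hc, -⟩, hfc⟩ := intermediate_value_Ioo hsqrt.le continuous.continuousOn
    ⟨sqrt_neg (S := S) hr hrT, add_add_one_pos hS hr hT⟩
  exact ⟨a, b, c, ha, hb₀, hb, hc, hfa, hfb, hfc⟩

theorem eq_or_eq_or_eq {a b c x : ℝ} (hab : a ≠ b) (hac : a ≠ c) (hbc : b ≠ c)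
    (ha : cubic S T r a = 0) (hb : cubic S T r b = 0) (hc : cubic S T r c = 0)
    (hx : cubic S T r x = 0) : x = a ∨ x = b ∨ x = c :=
  eq_or_eq_or_eq_of_cubic_eq_zero (p := -S) (q := -T) (s := r * S)
    (fun y => by unfold cubic; ring) hab hac hbc ha hb hc hx

end cubic

/-- For integers `r ≥ 1` and `n ≥ r + 3`, the cubic
`f(x) = x³ - (n-r-2)x² - (n-1)x + r(n-r-2)` has exactly three real roots, pairwise
distinct, lying respectively in `(-∞, 0)`, `(0, √r)` and `(√r, +∞)`. -/
theorem stmt4 {n r : ℕ} (hr : 1 ≤ r) (hn : r + 3 ≤ n)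
    (f : ℝ → ℝ)
    (hf : f = fun x => x ^ 3 - ((n : ℝ) - r - 2) * x ^ 2 - ((n : ℝ) - 1) * x
      + r * ((n : ℝ) - r - 2)) :
    ∃ a b c : ℝ, a < 0 ∧ 0 < b ∧ b < Real.sqrt r ∧ Real.sqrt r < c ∧
      f a = 0 ∧ f b = 0 ∧ f c = 0 ∧
      a ≠ b ∧ a ≠ c ∧ b ≠ c ∧
      (∀ x : ℝ, f x = 0 → x = a ∨ x = b ∨ x = c) := by
  obtain rfl : f = cubic (n - r - 2) (n - 1) r := hf
  have hr' : (1 : ℝ) ≤ r := by exact_mod_cast hr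
  have hn' : (r : ℝ) + 3 ≤ n := by exact_mod_cast hn
  obtain ⟨a, b, c, ha, hb₀, hb, hc, hfa, hfb, hfc⟩ :=
    cubic.exists_roots (S := n - r - 2) (T := n - 1) (r := r) (by linarith) (by linarith)
      (by linarith)
  have hab : a < b := ha.trans hb₀
  have hbc : b < c := hb.trans hc
  have hac : a < c := hab.trans hbc
  exact ⟨a, b, c, ha, hb₀, hb, hc, hfa, hfb, hfc, hab.ne, hac.ne, hbc.ne,
    fun x hx => cubic.eq_or_eq_or_eq hab.ne hac.ne hbc.ne hfa hfb hfc hx⟩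
end

section
/- Let K_{l_1*t_1,...,l_s*t_s} be a complete multipartite graph, fix i with l_i ≥ 2, and let X be a set of vertices consisting of p vertices of some part U_{i,j} (1 ≤ p ≤ t_i) together with q vertices of another part U_{i,k} (k ≠ j, 0 ≤ q < p). Then −t_i is a main eigenvalue of the adjacency matrix of the signed graph obtained from K_{l_1*t_1,...,l_s*t_s} by switching about X. -/
/-!
Switching about `X` replaces `A` by `D A D` with `D = diag(±1)` and `D² = 1`, so it sends an
eigenvector `v` of `A` to the eigenvector `D v` for the same eigenvalue. In a complete
multipartite graph `A = J - diag(J_{t_1}, …)`, so the vector `F = 1_{U_{i,j}} - 1_{U_{i,k}}`,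
which is constant on parts, supported on parts of size `t_i`, and has coordinate sum `0`,
satisfies `A F = -t_i F`. The coordinates of `D F` sum to `∑ F - 2 ∑_{u ∈ X} F u = -2 (p - q)`,
which is nonzero since `q < p`.
-/

open Matrix

/-- Index set for the parts of `K_{l_1*t_1, …, l_s*t_s}`: the part `U_{i,j}` corresponds
to the pair `⟨i, j⟩`. -/
abbrev PartIdx {s : ℕ} (l : Fin s → ℕ) := (i : Fin s) × Fin (l i)

/-- Vertex type of `K_{l_1*t_1, …, l_s*t_s}`: a vertex is a part together with a position
in that part (the part `⟨i, j⟩` has size `t i`). -/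
abbrev MV {s : ℕ} (l t : Fin s → ℕ) := (p : PartIdx l) × Fin (t p.1)

/-- The complete multipartite graph `K_{l_1*t_1, …, l_s*t_s}` having, for each `i`,
exactly `l i` parts of size `t i`. -/
def cmGraph {s : ℕ} (l t : Fin s → ℕ) : SimpleGraph (MV l t) :=
  SimpleGraph.completeMultipartiteGraph (fun p : PartIdx l => Fin (t p.1))

instance cmDecidable {s : ℕ} (l t : Fin s → ℕ) : DecidableRel (cmGraph l t).Adj :=
  fun a b => inferInstanceAs (Decidable (a.1 ≠ b.1))

section Switching

variable {m : Type*} [DecidableEq m]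

def switchingSign (X : Finset m) (u : m) : ℝ := if u ∈ X then -1 else 1

lemma switchingSign_mul_self (X : Finset m) (u : m) :
    switchingSign X u * switchingSign X u = 1 := by
  unfold switchingSign; split_ifs <;> norm_num

lemma switchingSign_mul_eq_sub (X : Finset m) (v : m → ℝ) (u : m) :
    switchingSign X u * v u = v u - 2 * if u ∈ X then v u else 0 := by
  unfold switchingSign; split_ifs <;> ring

lemma switchMatrix_apply (X : Finset m) (A : Matrix m m ℝ) (u w : m) :
    switchMatrix X A u w = switchingSign X u * A u w * switchingSign X w := rfl

variable [Fintype m]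

lemma switchMatrix_mulVec_switchingSign_mul (X : Finset m) (A : Matrix m m ℝ) (v : m → ℝ) :
    switchMatrix X A *ᵥ (switchingSign X * v) = switchingSign X * (A *ᵥ v) := by
  ext u
  simp only [mulVec, dotProduct, Pi.mul_apply, Finset.mul_sum, switchMatrix_apply]
  refine Finset.sum_congr rfl fun w _ => ?_
  linear_combination (switchingSign X u * A u w * v w) * switchingSign_mul_self X w

lemma switchMatrix_mulVec_eq_smul {X : Finset m} {A : Matrix m m ℝ} {v : m → ℝ} {μ : ℝ}
    (hv : A *ᵥ v = μ • v) :
    switchMatrix X A *ᵥ (switchingSign X * v) = μ • (switchingSign X * v) := by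
  rw [switchMatrix_mulVec_switchingSign_mul, hv, mul_smul_comm]

lemma sum_switchingSign_mul (X : Finset m) (v : m → ℝ) :
    ∑ u, (switchingSign X * v) u = ∑ u, v u - 2 * ∑ u ∈ X, v u := by
  simp only [Pi.mul_apply, switchingSign_mul_eq_sub, Finset.sum_sub_distrib, ← Finset.mul_sum,
    Finset.sum_ite_mem, Finset.univ_inter]

end Switching

section CompleteMultipartite

variable {ι : Type*} [Fintype ι] {V : ι → Type*} [∀ a, Fintype (V a)]

lemma sum_comp_fst (f : ι → ℝ) :
    ∑ u : Σ a, V a, f u.1 = ∑ a, (Fintype.card (V a) : ℝ) * f a := by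
  simp [← Finset.univ_sigma_univ, Finset.sum_sigma]

variable [DecidableEq ι]

lemma completeMultipartiteGraph_adjMatrix_mulVec_comp_fst
    [DecidableRel (SimpleGraph.completeMultipartiteGraph V).Adj] (f : ι → ℝ) (u : Σ a, V a) :
    ((SimpleGraph.completeMultipartiteGraph V).adjMatrix ℝ *ᵥ fun w => f w.1) u
      = ∑ w : Σ a, V a, f w.1 - Fintype.card (V u.1) * f u.1 := by
  have hpart :
      ∑ w : Σ a, V a, (if w.1 = u.1 then f w.1 else 0) = Fintype.card (V u.1) * f u.1 := by
    rw [sum_comp_fst (fun a => if a = u.1 then f a else 0)]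
    simp
  rw [← hpart, ← Finset.sum_sub_distrib]
  refine Finset.sum_congr rfl fun w _ => ?_
  by_cases h : w.1 = u.1 <;> simp [h, Ne.symm]

lemma completeMultipartiteGraph_adjMatrix_mulVec_eq_neg_smul
    [DecidableRel (SimpleGraph.completeMultipartiteGraph V).Adj] {n : ℕ} (f : ι → ℝ)
    (hsupp : ∀ a, f a ≠ 0 → Fintype.card (V a) = n) (hsum : ∑ w : Σ a, V a, f w.1 = 0) :
    ((SimpleGraph.completeMultipartiteGraph V).adjMatrix ℝ *ᵥ fun w => f w.1)
      = (-(n : ℝ)) • fun w => f w.1 := by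
  ext u
  rw [completeMultipartiteGraph_adjMatrix_mulVec_comp_fst, hsum, Pi.smul_apply, smul_eq_mul]
  by_cases hu : f u.1 = 0
  · simp [hu]
  · simp [hsupp _ hu]

end CompleteMultipartite

theorem stmt8_general {s : ℕ} (l t : Fin s → ℕ)
    (i : Fin s) (j k : Fin (l i))
    (p q : ℕ) (hq : q < p)
    (X : Finset (MV l t))
    (hXp : (X.filter (fun v => v.1 = ⟨i, j⟩)).card = p)
    (hXq : (X.filter (fun v => v.1 = ⟨i, k⟩)).card = q) :
    ∃ v : MV l t → ℝ, v ≠ 0 ∧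
      (switchMatrix X ((cmGraph l t).adjMatrix ℝ)).mulVec v = (-(t i : ℝ)) • v ∧
      ∑ u, v u ≠ 0 := by
  set f : PartIdx l → ℝ := fun a => (if a = ⟨i, j⟩ then 1 else 0) - if a = ⟨i, k⟩ then 1 else 0
  have hsupp : ∀ a, f a ≠ 0 → Fintype.card (Fin (t a.1)) = t i := by
    intro a ha
    by_cases hj : a = ⟨i, j⟩
    · simp [hj]
    by_cases hk : a = ⟨i, k⟩
    · simp [hk]
    simp [f, hj, hk] at ha
  have hsum : ∑ u : MV l t, f u.1 = 0 := by
    rw [sum_comp_fst]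
    simp [f, mul_sub, Finset.sum_sub_distrib]
  have heigen := completeMultipartiteGraph_adjMatrix_mulVec_eq_neg_smul f hsupp hsum
  have hsum_ne : ∑ u, (switchingSign X * fun u : MV l t => f u.1) u ≠ 0 := by
    rw [sum_switchingSign_mul, hsum, Finset.sum_sub_distrib, Finset.sum_boole, Finset.sum_boole,
      hXp, hXq]
    have : (q : ℝ) < p := by exact_mod_cast hq
    linarith
  exact ⟨_, fun h => hsum_ne (by rw [h]; simp), switchMatrix_mulVec_eq_smul heigen, hsum_ne⟩

/-- In `K_{l_1*t_1, …, l_s*t_s}` with `l i ≥ 2`, switch about a set `X`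
consisting of `p` vertices of a part `U_{i,j}` (`1 ≤ p ≤ t i`) together with `q` vertices
of another part `U_{i,k}` (`k ≠ j`, `0 ≤ q < p`).  Then `-t i` is a main eigenvalue of the
adjacency matrix of the resulting signed graph. -/
theorem stmt8 {s : ℕ} (l t : Fin s → ℕ)
    (hanti : ∀ i j : Fin s, i < j → t j < t i) (ht : ∀ i, 1 ≤ t i) (hl : ∀ i, 1 ≤ l i)
    (i : Fin s) (hli : 2 ≤ l i) (j k : Fin (l i)) (hjk : j ≠ k)
    (p q : ℕ) (hp1 : 1 ≤ p) (hp2 : p ≤ t i) (hq : q < p)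
    (X : Finset (MV l t))
    (hXsub : ∀ v ∈ X, v.1 = ⟨i, j⟩ ∨ v.1 = ⟨i, k⟩)
    (hXp : (X.filter (fun v => v.1 = ⟨i, j⟩)).card = p)
    (hXq : (X.filter (fun v => v.1 = ⟨i, k⟩)).card = q) :
    ∃ v : MV l t → ℝ, v ≠ 0 ∧
      (switchMatrix X ((cmGraph l t).adjMatrix ℝ)).mulVec v = (-(t i : ℝ)) • v ∧
      ∑ u, v u ≠ 0 :=
  stmt8_general l t i j k p q hq X hXp hXq
end

section
/- Every complete multipartite graph K_{l_1*t_1,...,l_s*t_s} on at least 9 vertices admits a subset X of its vertices such that every eigenvalue of the adjacency matrix of the signed graph obtained by switching about X is a main eigenvalue. -/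
open Matrix

open Matrix Finset
set_option linter.unusedSectionVars false

namespace Stmt12

/-! ### Switching reduction -/

section Switch

variable {V : Type*} [Fintype V] [DecidableEq V]

/-- sign function from a finset -/
def sgn (X : Finset V) : V → ℝ := fun u => if u ∈ X then -1 else 1

lemma sgn_sq (X : Finset V) (u : V) : sgn X u * sgn X u = 1 := by
  unfold sgn; split_ifs <;> norm_num

lemma sgn_ne_zero (X : Finset V) (u : V) : sgn X u ≠ 0 := by
  unfold sgn; split_ifs <;> norm_num

def swM (X : Finset V) (A : Matrix V V ℝ) : Matrix V V ℝ :=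
  fun i j => sgn X i * A i j * sgn X j

lemma swM_mulVec (X : Finset V) (A : Matrix V V ℝ) (v : V → ℝ) (u : V) :
    (swM X A).mulVec v u = sgn X u * A.mulVec (fun w => sgn X w * v w) u := by
  simp only [mulVec, dotProduct, swM, Finset.mul_sum]
  exact Finset.sum_congr rfl fun j _ => by ring

/-- eigenvector transfer, forward -/
lemma eigen_transfer (X : Finset V) (A : Matrix V V ℝ) (μ : ℝ) (v : V → ℝ)
    (hv : (swM X A).mulVec v = μ • v) :
    A.mulVec (fun w => sgn X w * v w) = μ • (fun w => sgn X w * v w) := by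
  funext u
  have h1 := congrFun hv u
  rw [swM_mulVec] at h1
  have h2 := congrArg (fun z => sgn X u * z) h1
  rw [← mul_assoc, sgn_sq, one_mul] at h2
  rw [h2]
  simp only [Pi.smul_apply, smul_eq_mul]
  ring

/-- eigenvector transfer, backward -/
lemma eigen_transfer' (X : Finset V) (A : Matrix V V ℝ) (μ : ℝ) (w : V → ℝ)
    (hw : A.mulVec w = μ • w) :
    (swM X A).mulVec (fun u => sgn X u * w u) = μ • (fun u => sgn X u * w u) := by
  funext u
  rw [swM_mulVec]
  have : (fun z => sgn X z * (sgn X z * w z)) = w := by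
    funext z; rw [← mul_assoc, sgn_sq, one_mul]
  rw [show (fun z => sgn X z * (fun u => sgn X u * w u) z) = w from this]
  rw [hw]
  simp only [Pi.smul_apply, smul_eq_mul]
  ring

lemma mul_ne_zero_fun (X : Finset V) (w : V → ℝ) (hw : w ≠ 0) :
    (fun u => sgn X u * w u) ≠ 0 := by
  intro h
  apply hw
  funext u
  have := congrFun h u
  simp only [Pi.zero_apply] at this ⊢
  rcases mul_eq_zero.1 this with h' | h'
  · exact absurd h' (sgn_ne_zero X u)
  · exact h'

end Switch

/-! ### The multipartite graph: mulVec formula -/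

section Graph

variable {s : ℕ} (l t : Fin s → ℕ)

/-- sum over vertices decomposes into parts -/
lemma sum_mv {M : Type*} [AddCommMonoid M]
    (F : ((p : (i : Fin s) × Fin (l i)) × Fin (t p.1)) → M) :
    ∑ u : (p : (i : Fin s) × Fin (l i)) × Fin (t p.1), F u
      = ∑ p : (i : Fin s) × Fin (l i), ∑ a : Fin (t p.1), F ⟨p, a⟩ := by
  rw [← Finset.univ_sigma_univ, Finset.sum_sigma]

lemma sum_part {M : Type*} [AddCommMonoid M] (F : ((i : Fin s) × Fin (l i)) → M) :
    ∑ p : (i : Fin s) × Fin (l i), F p = ∑ i : Fin s, ∑ q : Fin (l i), F ⟨i, q⟩ := by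
  rw [← Finset.univ_sigma_univ, Finset.sum_sigma]

/-- adjacency matrix application -/
lemma cm_mulVec (w : ((p : (i : Fin s) × Fin (l i)) × Fin (t p.1)) → ℝ)
    (u : (p : (i : Fin s) × Fin (l i)) × Fin (t p.1)) :
    ((SimpleGraph.completeMultipartiteGraph
        (fun p : (i : Fin s) × Fin (l i) => Fin (t p.1))).adjMatrix ℝ).mulVec w u
      = (∑ v, w v) - ∑ a : Fin (t u.1.1), w ⟨u.1, a⟩ := by
  simp only [mulVec, dotProduct, SimpleGraph.adjMatrix_apply]
  rw [sum_mv l t (fun v => (if (SimpleGraph.completeMultipartiteGraph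
        (fun p : (i : Fin s) × Fin (l i) => Fin (t p.1))).Adj u v then 1 else 0) * w v)]
  rw [sum_mv l t w]
  have key : ∀ p : (i : Fin s) × Fin (l i),
      ∑ a : Fin (t p.1), (if (SimpleGraph.completeMultipartiteGraph
        (fun p : (i : Fin s) × Fin (l i) => Fin (t p.1))).Adj u ⟨p, a⟩ then 1 else 0) * w ⟨p, a⟩
      = if u.1 = p then 0 else ∑ a : Fin (t p.1), w ⟨p, a⟩ := by
    intro p
    by_cases hp : u.1 = p
    · simp only [if_pos hp]
      apply Finset.sum_eq_zero
      intro a _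
      have : ¬ (SimpleGraph.completeMultipartiteGraph
        (fun p : (i : Fin s) × Fin (l i) => Fin (t p.1))).Adj u ⟨p, a⟩ := by
        simp [SimpleGraph.completeMultipartiteGraph, hp]
      rw [if_neg this, zero_mul]
    · simp only [if_neg hp]
      apply Finset.sum_congr rfl
      intro a _
      have : (SimpleGraph.completeMultipartiteGraph
        (fun p : (i : Fin s) × Fin (l i) => Fin (t p.1))).Adj u ⟨p, a⟩ := by
        simp [SimpleGraph.completeMultipartiteGraph, hp]
      rw [if_pos this, one_mul]
  rw [Finset.sum_congr rfl (fun p _ => key p)]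
  have expand : ∀ p : (i : Fin s) × Fin (l i),
      (if u.1 = p then (0:ℝ) else ∑ a : Fin (t p.1), w ⟨p, a⟩)
      = (∑ a : Fin (t p.1), w ⟨p, a⟩) - (if u.1 = p then ∑ a : Fin (t p.1), w ⟨p, a⟩ else 0) := by
    intro p; split_ifs <;> ring
  rw [Finset.sum_congr rfl (fun p _ => expand p), Finset.sum_sub_distrib]
  congr 1
  rw [Finset.sum_ite_eq]
  simp

end Graph

end Stmt12


open Matrix Finset
set_option linter.unusedSectionVars false

namespace Stmt12

open scoped Classical

/-! ### helper sums -/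

lemma filter_range_lt (m k : ℕ) (h : k ≤ m) :
    (Finset.range m).filter (fun j => j < k) = Finset.range k := by
  ext j; simp only [Finset.mem_filter, Finset.mem_range]; omega

lemma filter_range_eq (m j : ℕ) (h : j < m) :
    (Finset.range m).filter (fun a => a = j) = {j} := by
  ext a; simp only [Finset.mem_filter, Finset.mem_range, Finset.mem_singleton]; omega

lemma sum_ind_lt (m k : ℕ) (h : k ≤ m) :
    ∑ a : Fin m, (if a.val < k then (1:ℝ) else 0) = k := by
  rw [Fin.sum_univ_eq_sum_range (fun j => if j < k then (1:ℝ) else 0) m]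
  rw [← Finset.sum_filter, filter_range_lt m k h, Finset.sum_const, Finset.card_range]
  simp

lemma sum_ind_eq (m j : ℕ) (h : j < m) :
    ∑ a : Fin m, (if a.val = j then (1:ℝ) else 0) = 1 := by
  rw [Fin.sum_univ_eq_sum_range (fun a => if a = j then (1:ℝ) else 0) m]
  rw [← Finset.sum_filter, filter_range_eq m j h, Finset.sum_singleton]

lemma sum_pm (m k : ℕ) (h : k ≤ m) :
    ∑ a : Fin m, (if a.val < k then (-1:ℝ) else 1) = m - 2*k := by
  have step : ∀ a : Fin m, (if a.val < k then (-1:ℝ) else 1)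
      = 1 - 2 * (if a.val < k then (1:ℝ) else 0) := by
    intro a; split_ifs <;> ring
  rw [Finset.sum_congr rfl (fun a _ => step a), Finset.sum_sub_distrib, ← Finset.mul_sum]
  rw [sum_ind_lt m k h]
  simp [mul_comm]

/-! ### the construction -/

section Constr

variable {s : ℕ} (l t : Fin s → ℕ)

def oddOne : Prop := ∃ i, t i = 1 ∧ l i % 2 = 1

def topSp : Prop := s = 1 ∨ ∃ i : Fin s, i.val = 0 ∧ t i = 2 ∧ l i = 1

noncomputable def K1 (i : Fin s) : ℕ :=
  if l i % 2 = 1 then (l i + 1)/2 else if topSp l t then (l i - 2)/2 else l i / 2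

noncomputable def xx (i : Fin s) (q : Fin (l i)) : ℕ :=
  if t i = 1 then (if q.val < K1 l t i then 1 else 0)
  else if i.val = 0 ∧ t i = 2 ∧ l i = 2 then (if q.val = 0 then 1 else 0)
  else if i.val = 0 ∧ t i = 2 ∧ ¬ oddOne l t ∧ 3 ≤ l i then (if q.val = 1 then 0 else 1)
  else (if l i = 1 then 1 else if q.val = 0 then 2 else if q.val = 1 then 0 else 1)

noncomputable def XX : Finset ((p : (i : Fin s) × Fin (l i)) × Fin (t p.1)) :=
  Finset.univ.filter (fun u => u.2.val < xx l t u.1.1 u.1.2)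

lemma sgn_XX (u : (p : (i : Fin s) × Fin (l i)) × Fin (t p.1)) :
    sgn (XX l t) u = if u.2.val < xx l t u.1.1 u.1.2 then -1 else 1 := by
  unfold sgn XX
  by_cases h : u.2.val < xx l t u.1.1 u.1.2 <;> simp [h]

noncomputable def tau (p : (i : Fin s) × Fin (l i)) : ℝ :=
  ∑ a : Fin (t p.1), sgn (XX l t) ⟨p, a⟩

noncomputable def Tr (i : Fin s) : ℝ := ∑ q : Fin (l i), tau l t ⟨i, q⟩

lemma K1_le (i : Fin s) : K1 l t i ≤ l i := by
  unfold K1; split_ifs <;> omega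

lemma xx_le (ht : ∀ i, 1 ≤ t i) (i : Fin s) (q : Fin (l i)) : xx l t i q ≤ t i := by
  have h1 := ht i
  unfold xx; split_ifs <;> omega

lemma tau_eq (ht : ∀ i, 1 ≤ t i) (p : (i : Fin s) × Fin (l i)) :
    tau l t p = (t p.1 : ℝ) - 2 * (xx l t p.1 p.2 : ℝ) := by
  unfold tau
  have : ∀ a : Fin (t p.1), sgn (XX l t) ⟨p, a⟩
      = if a.val < xx l t p.1 p.2 then (-1:ℝ) else 1 := by
    intro a; rw [sgn_XX]
  rw [Finset.sum_congr rfl (fun a _ => this a)]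
  rw [sum_pm (t p.1) (xx l t p.1 p.2) (xx_le l t ht p.1 p.2)]

lemma Tr_eq (ht : ∀ i, 1 ≤ t i) (i : Fin s) :
    Tr l t i = (l i : ℝ) * (t i : ℝ) - 2 * ∑ q : Fin (l i), (xx l t i q : ℝ) := by
  unfold Tr
  have e : ∀ q : Fin (l i), tau l t ⟨i, q⟩ = (t i : ℝ) - 2 * (xx l t i q : ℝ) :=
    fun q => tau_eq l t ht ⟨i, q⟩
  rw [Finset.sum_congr rfl (fun q _ => e q)]
  rw [Finset.sum_sub_distrib, ← Finset.mul_sum, Finset.sum_const, Finset.card_univ]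
  simp [Fintype.card_fin, nsmul_eq_mul]

/-! sums of `xx` per branch -/

lemma sum_xx_t1 (i : Fin s) (h1 : t i = 1) :
    ∑ q : Fin (l i), (xx l t i q : ℝ) = K1 l t i := by
  have : ∀ q : Fin (l i), (xx l t i q : ℝ) = if q.val < K1 l t i then (1:ℝ) else 0 := by
    intro q; unfold xx; rw [if_pos h1]; split_ifs <;> simp
  rw [Finset.sum_congr rfl (fun q _ => this q)]
  exact sum_ind_lt (l i) (K1 l t i) (K1_le l t i)

lemma sum_xx_B2 (i : Fin s) (h1 : i.val = 0) (h2 : t i = 2) (h3 : l i = 2) :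
    ∑ q : Fin (l i), (xx l t i q : ℝ) = 1 := by
  have hne : ¬ t i = 1 := by omega
  have : ∀ q : Fin (l i), (xx l t i q : ℝ) = if q.val = 0 then (1:ℝ) else 0 := by
    intro q; unfold xx; rw [if_neg hne, if_pos ⟨h1, h2, h3⟩]; split_ifs <;> simp
  rw [Finset.sum_congr rfl (fun q _ => this q)]
  exact sum_ind_eq (l i) 0 (by omega)

lemma sum_xx_B3 (i : Fin s) (h1 : i.val = 0) (h2 : t i = 2) (h3 : ¬ oddOne l t)
    (h4 : 3 ≤ l i) :
    ∑ q : Fin (l i), (xx l t i q : ℝ) = (l i : ℝ) - 1 := by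
  have hne : ¬ t i = 1 := by omega
  have hne2 : ¬ (i.val = 0 ∧ t i = 2 ∧ l i = 2) := by
    rintro ⟨-, -, h⟩; omega
  have : ∀ q : Fin (l i), (xx l t i q : ℝ)
      = 1 - (if q.val = 1 then (1:ℝ) else 0) := by
    intro q; unfold xx
    rw [if_neg hne, if_neg hne2, if_pos ⟨h1, h2, h3, h4⟩]
    split_ifs <;> simp
  rw [Finset.sum_congr rfl (fun q _ => this q), Finset.sum_sub_distrib]
  rw [sum_ind_eq (l i) 1 (by omega), Finset.sum_const, Finset.card_univ]
  simp [Fintype.card_fin, nsmul_eq_mul]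

lemma sum_xx_main (hl : ∀ i, 1 ≤ l i) (i : Fin s) (hne : ¬ t i = 1)
    (hne2 : ¬ (i.val = 0 ∧ t i = 2 ∧ l i = 2))
    (hne3 : ¬ (i.val = 0 ∧ t i = 2 ∧ ¬ oddOne l t ∧ 3 ≤ l i)) :
    ∑ q : Fin (l i), (xx l t i q : ℝ) = (l i : ℝ) := by
  by_cases hl1 : l i = 1
  · have : ∀ q : Fin (l i), (xx l t i q : ℝ) = 1 := by
      intro q; unfold xx; rw [if_neg hne, if_neg hne2, if_neg hne3, if_pos hl1]; simp
    rw [Finset.sum_congr rfl (fun q _ => this q), Finset.sum_const, Finset.card_univ]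
    simp [Fintype.card_fin, hl1]
  · have hl2 : 2 ≤ l i := by have := hl i; omega
    have : ∀ q : Fin (l i), (xx l t i q : ℝ)
        = 1 + (if q.val = 0 then (1:ℝ) else 0) - (if q.val = 1 then (1:ℝ) else 0) := by
      intro q; unfold xx; rw [if_neg hne, if_neg hne2, if_neg hne3, if_neg hl1]
      rcases Nat.lt_or_ge q.val 1 with h | h
      · have h0 : q.val = 0 := by omega
        rw [if_pos h0, if_pos h0, if_neg (by omega)]; norm_num
      · rcases Nat.lt_or_ge q.val 2 with h' | h'
        · have h1' : q.val = 1 := by omega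
          rw [if_neg (by omega), if_pos h1', if_neg (by omega), if_pos h1']; norm_num
        · rw [if_neg (by omega), if_neg (by omega), if_neg (by omega), if_neg (by omega)]
          norm_num
    rw [Finset.sum_congr rfl (fun q _ => this q)]
    rw [Finset.sum_sub_distrib, Finset.sum_add_distrib]
    rw [sum_ind_eq (l i) 0 (by omega), sum_ind_eq (l i) 1 (by omega),
      Finset.sum_const, Finset.card_univ]
    simp [Fintype.card_fin]

/-! ### values of `Tr` -/

lemma Tr_t1_odd (ht : ∀ i, 1 ≤ t i) (i : Fin s) (h1 : t i = 1) (h2 : l i % 2 = 1) :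
    Tr l t i = -1 := by
  rw [Tr_eq l t ht i, sum_xx_t1 l t i h1]
  unfold K1; rw [if_pos h2]
  have h3 : 2 * ((l i + 1) / 2) = l i + 1 := by omega
  have h4 : 2 * (((l i + 1) / 2 : ℕ) : ℝ) = (l i : ℝ) + 1 := by
    exact_mod_cast congrArg (Nat.cast : ℕ → ℝ) h3
  rw [h1]; push_cast; linarith

lemma Tr_t1_even_sp (ht : ∀ i, 1 ≤ t i) (i : Fin s) (h1 : t i = 1) (h2 : l i % 2 = 0)
    (hsp : topSp l t) (h5 : 2 ≤ l i) :
    Tr l t i = 2 := by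
  rw [Tr_eq l t ht i, sum_xx_t1 l t i h1]
  unfold K1; rw [if_neg (by omega), if_pos hsp]
  have h3 : 2 * ((l i - 2) / 2) = l i - 2 := by omega
  have h4 : 2 * (((l i - 2) / 2 : ℕ) : ℝ) = (l i : ℝ) - 2 := by
    have := congrArg (Nat.cast : ℕ → ℝ) h3
    push_cast [h5] at this
    linarith [this]
  rw [h1]; push_cast; linarith

lemma Tr_t1_even_nsp (ht : ∀ i, 1 ≤ t i) (i : Fin s) (h1 : t i = 1) (h2 : l i % 2 = 0)
    (hsp : ¬ topSp l t) :
    Tr l t i = 0 := by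
  rw [Tr_eq l t ht i, sum_xx_t1 l t i h1]
  unfold K1; rw [if_neg (by omega), if_neg hsp]
  have h3 : 2 * (l i / 2) = l i := by omega
  have h4 : 2 * ((l i / 2 : ℕ) : ℝ) = (l i : ℝ) := by
    exact_mod_cast congrArg (Nat.cast : ℕ → ℝ) h3
  rw [h1]; push_cast; linarith

lemma Tr_B2 (ht : ∀ i, 1 ≤ t i) (i : Fin s) (h1 : i.val = 0) (h2 : t i = 2)
    (h3 : l i = 2) : Tr l t i = 2 := by
  rw [Tr_eq l t ht i, sum_xx_B2 l t i h1 h2 h3, h2, h3]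
  norm_num

lemma Tr_B3 (ht : ∀ i, 1 ≤ t i) (i : Fin s) (h1 : i.val = 0) (h2 : t i = 2)
    (h3 : ¬ oddOne l t) (h4 : 3 ≤ l i) : Tr l t i = 2 := by
  rw [Tr_eq l t ht i, sum_xx_B3 l t i h1 h2 h3 h4, h2]
  push_cast; ring

lemma Tr_main (hl : ∀ i, 1 ≤ l i) (ht : ∀ i, 1 ≤ t i) (i : Fin s) (hne : ¬ t i = 1)
    (hne2 : ¬ (i.val = 0 ∧ t i = 2 ∧ l i = 2))
    (hne3 : ¬ (i.val = 0 ∧ t i = 2 ∧ ¬ oddOne l t ∧ 3 ≤ l i)) :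
    Tr l t i = (l i : ℝ) * ((t i : ℝ) - 2) := by
  rw [Tr_eq l t ht i, sum_xx_main l t hl i hne hne2 hne3]
  ring

/-! ### facts when the largest part has size ≥ 3 -/

lemma TrA2 (hanti : ∀ i j : Fin s, i < j → t j < t i) (hl : ∀ i, 1 ≤ l i)
    (ht : ∀ i, 1 ≤ t i) (hs : 0 < s) (h3 : 3 ≤ t ⟨0, hs⟩) :
    ∀ i, 2 ≤ t i → Tr l t i = (l i : ℝ) * ((t i : ℝ) - 2) := by
  intro i hi
  apply Tr_main l t hl ht i (by omega)
  · rintro ⟨hv, h2, -⟩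
    have : i = ⟨0, hs⟩ := Fin.ext hv
    rw [this] at h2; omega
  · rintro ⟨hv, h2, -, -⟩
    have : i = ⟨0, hs⟩ := Fin.ext hv
    rw [this] at h2; omega

lemma nsp_of_top3 (hs : 0 < s) (h3 : 3 ≤ t ⟨0, hs⟩) (hex : ∃ i, t i = 1) :
    ¬ topSp l t := by
  rintro (h1 | ⟨i0, hv, h2, -⟩)
  · obtain ⟨i, hi⟩ := hex
    have : i = ⟨0, hs⟩ := by
      apply Fin.ext; omega
    rw [this] at hi; omega
  · have : i0 = ⟨0, hs⟩ := Fin.ext hv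
    rw [this] at h2; omega

lemma TrA1 (hl : ∀ i, 1 ≤ l i) (ht : ∀ i, 1 ≤ t i) (hs : 0 < s) (h3 : 3 ≤ t ⟨0, hs⟩) :
    ∀ i, t i = 1 → Tr l t i = 0 ∨ Tr l t i = -1 := by
  intro i hi
  by_cases hp : l i % 2 = 1
  · exact Or.inr (Tr_t1_odd l t ht i hi hp)
  · left
    exact Tr_t1_even_nsp l t ht i hi (by omega) (nsp_of_top3 l t hs h3 ⟨i, hi⟩)

/-! ### unequal part sums within a class -/

lemma s_eq_two (hanti : ∀ i j : Fin s, i < j → t j < t i) (ht : ∀ i, 1 ≤ t i)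
    (hs : 0 < s) (h2 : t ⟨0, hs⟩ = 2) (i : Fin s) (h1 : t i = 1) : s = 2 := by
  have hi0 : (0:ℕ) < i.val := by
    rcases Nat.eq_zero_or_pos i.val with h | h
    · exfalso; have : i = ⟨0, hs⟩ := Fin.ext h; rw [this] at h1; omega
    · exact h
  by_contra hne
  have hs3 : 3 ≤ s := by have := i.isLt; omega
  have hlt1 : t ⟨1, by omega⟩ < t ⟨0, hs⟩ := hanti _ _ (by simp [Fin.lt_def])
  have hlt2 : t ⟨2, by omega⟩ < t ⟨1, by omega⟩ := hanti _ _ (by simp [Fin.lt_def])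
  have := ht ⟨2, by omega⟩
  omega

lemma sp_t1_large (hanti : ∀ i j : Fin s, i < j → t j < t i) (hl : ∀ i, 1 ≤ l i)
    (ht : ∀ i, 1 ≤ t i) (hn : 9 ≤ ∑ j, l j * t j) (i : Fin s) (h1 : t i = 1)
    (hsp : topSp l t) : 7 ≤ l i := by
  rcases hsp with h | ⟨i0, hv, h2, h3⟩
  · subst h
    have hi : i = 0 := Subsingleton.elim i 0
    rw [Fin.sum_univ_one] at hn
    have ht0 : t 0 = 1 := by rw [← hi]; exact h1
    rw [ht0, Nat.mul_one] at hn
    rw [hi]; omega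
  · have hs : 0 < s := by omega
    have hi0 : i0 = ⟨0, hs⟩ := Fin.ext hv
    have h2' : t ⟨0, hs⟩ = 2 := by rw [← hi0]; exact h2
    have hseq : s = 2 := s_eq_two t hanti ht hs h2' i h1
    subst hseq
    rw [Fin.sum_univ_two] at hn
    have e0 : (0 : Fin 2) = ⟨0, hs⟩ := rfl
    have hiv : i = 1 := by
      apply Fin.ext
      have : i.val ≠ 0 := by
        intro h; have : i = ⟨0, hs⟩ := Fin.ext h
        rw [this, h2'] at h1; omega
      have := i.isLt; omega
    have hl0 : l 0 = 1 := by rw [show (0:Fin 2) = i0 from (by rw [hi0]; rfl)]; exact h3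
    have ht0 : t 0 = 2 := by rw [e0]; exact h2'
    have ht1 : t 1 = 1 := by rw [← hiv]; exact h1
    rw [hl0, ht0, ht1, Nat.mul_one] at hn
    rw [hiv]
    omega

lemma xx_uneq (hanti : ∀ i j : Fin s, i < j → t j < t i) (hl : ∀ i, 1 ≤ l i)
    (ht : ∀ i, 1 ≤ t i) (hn : 9 ≤ ∑ j, l j * t j) (i : Fin s) (hli : 2 ≤ l i) :
    ∃ q1 q2 : Fin (l i), xx l t i q1 ≠ xx l t i q2 := by
  by_cases h1 : t i = 1
  · -- bounds on K1
    have hK : 1 ≤ K1 l t i ∧ K1 l t i ≤ l i - 1 := by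
      unfold K1
      by_cases hp : l i % 2 = 1
      · rw [if_pos hp]; omega
      · rw [if_neg hp]
        by_cases hsp : topSp l t
        · rw [if_pos hsp]
          have := sp_t1_large l t hanti hl ht hn i h1 hsp
          omega
        · rw [if_neg hsp]; omega
    refine ⟨⟨0, by omega⟩, ⟨l i - 1, by omega⟩, ?_⟩
    unfold xx
    rw [if_pos h1, if_pos h1]
    simp only
    rw [if_pos (by omega : (0:ℕ) < K1 l t i), if_neg (by omega : ¬ (l i - 1 < K1 l t i))]
    omega
  · by_cases hB2 : i.val = 0 ∧ t i = 2 ∧ l i = 2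
    · refine ⟨⟨0, by omega⟩, ⟨1, by omega⟩, ?_⟩
      unfold xx
      rw [if_neg h1, if_neg h1, if_pos hB2, if_pos hB2]
      simp
    · by_cases hB3 : i.val = 0 ∧ t i = 2 ∧ ¬ oddOne l t ∧ 3 ≤ l i
      · refine ⟨⟨0, by omega⟩, ⟨1, by omega⟩, ?_⟩
        unfold xx
        rw [if_neg h1, if_neg h1, if_neg hB2, if_neg hB2, if_pos hB3, if_pos hB3]
        simp
      · refine ⟨⟨0, by omega⟩, ⟨1, by omega⟩, ?_⟩
        unfold xx
        rw [if_neg h1, if_neg h1, if_neg hB2, if_neg hB2, if_neg hB3, if_neg hB3,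
          if_neg (by omega : ¬ l i = 1), if_neg (by omega : ¬ l i = 1)]
        simp

lemma tau_uneq (hanti : ∀ i j : Fin s, i < j → t j < t i) (hl : ∀ i, 1 ≤ l i)
    (ht : ∀ i, 1 ≤ t i) (hn : 9 ≤ ∑ j, l j * t j) (i : Fin s) (hli : 2 ≤ l i) :
    ∃ q1 q2 : Fin (l i), tau l t ⟨i, q1⟩ ≠ tau l t ⟨i, q2⟩ := by
  obtain ⟨q1, q2, hq⟩ := xx_uneq l t hanti hl ht hn i hli
  refine ⟨q1, q2, ?_⟩
  rw [tau_eq l t ht ⟨i, q1⟩, tau_eq l t ht ⟨i, q2⟩]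
  intro h
  apply hq
  have : (xx l t i q1 : ℝ) = (xx l t i q2 : ℝ) := by
    simp only at h
    linarith
  exact_mod_cast this

/-! ### a part on which the switching is non-constant -/

lemma xx_nonconst' (hl : ∀ i, 1 ≤ l i) (ht : ∀ i, 1 ≤ t i) (i : Fin s)
    (hv : i.val = 0) (h2 : 2 ≤ t i) :
    ∃ q : Fin (l i), 0 < xx l t i q ∧ xx l t i q < t i := by
  have hli := hl i
  have h1 : ¬ t i = 1 := by omega
  by_cases hB2 : i.val = 0 ∧ t i = 2 ∧ l i = 2
  · obtain ⟨-, ht2, hl2⟩ := hB2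
    refine ⟨⟨0, by omega⟩, ?_⟩
    unfold xx
    rw [if_neg h1, if_pos ⟨hv, ht2, hl2⟩]
    rw [if_pos (show ((⟨0, by omega⟩ : Fin (l i)) : ℕ) = 0 from rfl)]
    omega
  · by_cases hB3 : i.val = 0 ∧ t i = 2 ∧ ¬ oddOne l t ∧ 3 ≤ l i
    · have ht2 := hB3.2.1
      refine ⟨⟨0, by omega⟩, ?_⟩
      unfold xx
      rw [if_neg h1, if_neg hB2, if_pos hB3]
      rw [if_neg (show ¬ (0:ℕ) = 1 from by omega)]
      omega
    · by_cases hl1 : l i = 1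
      · refine ⟨⟨0, by omega⟩, ?_⟩
        unfold xx
        rw [if_neg h1, if_neg hB2, if_neg hB3, if_pos hl1]
        omega
      · by_cases hl2 : l i = 2
        · have ht3 : 3 ≤ t i := by
            rcases Nat.lt_or_ge (t i) 3 with h | h
            · exact absurd ⟨hv, by omega, hl2⟩ hB2
            · exact h
          refine ⟨⟨0, by omega⟩, ?_⟩
          unfold xx
          rw [if_neg h1, if_neg hB2, if_neg hB3, if_neg hl1]
          rw [if_pos (show ((⟨0, by omega⟩ : Fin (l i)) : ℕ) = 0 from rfl)]
          omega
        · have hl3 : 3 ≤ l i := by have := hl i; omega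
          refine ⟨⟨2, by omega⟩, ?_⟩
          unfold xx
          rw [if_neg h1, if_neg hB2, if_neg hB3, if_neg hl1]
          rw [if_neg (show ¬ (2:ℕ) = 0 from by omega)]
          rw [if_neg (show ¬ (2:ℕ) = 1 from by omega)]
          omega

lemma xx_nonconst (hl : ∀ i, 1 ≤ l i) (ht : ∀ i, 1 ≤ t i) (hs : 0 < s)
    (h2 : 2 ≤ t ⟨0, hs⟩) :
    ∃ (i : Fin s) (q : Fin (l i)), 0 < xx l t i q ∧ xx l t i q < t i := by
  obtain ⟨q, hq⟩ := xx_nonconst' l t hl ht ⟨0, hs⟩ rfl h2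
  exact ⟨⟨0, hs⟩, q, hq⟩

end Constr

end Stmt12


open Matrix Finset
set_option linter.unusedSectionVars false
set_option maxHeartbeats 1000000

namespace Stmt12

lemma div_le_div_left' (a b c : ℝ) (ha : 0 ≤ a) (hc : 0 < c) (h : c ≤ b) :
    a / b ≤ a / c := by
  have hb : 0 < b := lt_of_lt_of_le hc h
  rw [div_le_div_iff₀ hb hc]
  exact mul_le_mul_of_nonneg_left h ha

lemma div_lt_div_left' (a b c : ℝ) (ha : 0 < a) (hc : 0 < c) (h : c < b) :
    a / b < a / c := by
  have hb : 0 < b := lt_trans hc h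
  rw [div_lt_div_iff₀ hb hc]
  exact mul_lt_mul_of_pos_left h ha

/-- the key numeric inequality -/
lemma keyIneq (P t0 n : ℝ) (h1 : 2 ≤ P) (h2 : t0 ≤ P + 2) (h3 : 9 ≤ n)
    (h4 : t0 + 1 ≤ n) : P * (t0 - 1) < (P - 1) * n := by
  have hW : (3:ℝ) ≤ (P - 1) * (n - t0) := by
    rcases le_or_gt n (t0 + 3) with hbb | hbb
    · have h4' : (4:ℝ) ≤ P := by linarith
      calc (3:ℝ) = 3 * 1 := by norm_num
        _ ≤ (P - 1) * (n - t0) :=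
          mul_le_mul (by linarith) (by linarith) (by norm_num) (by linarith)
    · calc (3:ℝ) = 1 * 3 := by norm_num
        _ ≤ (P - 1) * (n - t0) :=
          mul_le_mul (by linarith) (by linarith) (by norm_num) (by linarith)
  nlinarith [hW]

section CertA

variable {s : ℕ} (l t : Fin s → ℕ)

lemma t_inj (hanti : ∀ i j : Fin s, i < j → t j < t i) (i j : Fin s)
    (h : t i = t j) : i = j := by
  rcases lt_trichotomy i j with hij | hij | hij
  · exact absurd (hanti i j hij) (by omega)
  · exact hij
  · exact absurd (hanti j i hij) (by omega)

lemma certA (hanti : ∀ i j : Fin s, i < j → t j < t i) (hl : ∀ i, 1 ≤ l i)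
    (ht : ∀ i, 1 ≤ t i) (hn : 9 ≤ ∑ j, l j * t j) (hs : 0 < s)
    (h3 : 3 ≤ t ⟨0, hs⟩) (μ : ℝ) (hne : ∀ i, μ + (t i : ℝ) ≠ 0)
    (hg : ∑ i, (l i : ℝ) * (t i : ℝ) / (μ + (t i : ℝ)) = 1) :
    ∑ i, Tr l t i / (μ + (t i : ℝ)) ≠ 0 := by
  intro hf0
  set c : Fin s → ℝ := fun i => μ + (t i : ℝ) with hc
  have hcmono : ∀ i j : Fin s, i < j → c j < c i := by
    intro i j hij
    have h' := hanti i j hij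
    have : (t j : ℝ) < t i := by exact_mod_cast h'
    simp only [hc]
    linarith
  have hcmono' : ∀ i j : Fin s, i ≤ j → c j ≤ c i := by
    intro i j hij
    rcases eq_or_lt_of_le hij with h | h
    · rw [h]
    · exact le_of_lt (hcmono i j h)
  have hTr2 := TrA2 l t hanti hl ht hs h3
  have hTr1 := TrA1 l t hl ht hs h3
  have hzero_le : ∀ i : Fin s, (⟨0, hs⟩ : Fin s) ≤ i := by
    intro i; simp [Fin.le_def]
  have hTr0pos : 0 < Tr l t ⟨0, hs⟩ := by
    rw [hTr2 ⟨0, hs⟩ (by omega)]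
    have h1 : (1:ℝ) ≤ (l ⟨0, hs⟩ : ℝ) := by exact_mod_cast hl _
    have h2 : (3:ℝ) ≤ (t ⟨0, hs⟩ : ℝ) := by exact_mod_cast h3
    nlinarith
  by_cases hall : ∀ i, 0 < c i
  · -- all poles to the left
    have hc0max : ∀ i, c i ≤ c ⟨0, hs⟩ := fun i => hcmono' _ i (hzero_le i)
    have hc0pos : 0 < c ⟨0, hs⟩ := hall _
    by_cases hnegcl : ∃ i1, t i1 = 1 ∧ Tr l t i1 = -1
    · obtain ⟨i1, ht1, hTri1⟩ := hnegcl
      have hi1ne0 : i1 ≠ ⟨0, hs⟩ := by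
        intro h; rw [h] at ht1; omega
      have hci1pos : 0 < c i1 := hall i1
      have hci1lt0 : c i1 < c ⟨0, hs⟩ :=
        hcmono _ _ (lt_of_le_of_ne (hzero_le i1) (Ne.symm hi1ne0))
      have hTother : ∀ i, i ≠ i1 → Tr l t i = ((l i * (t i - 2) : ℕ) : ℝ) ∧ 2 ≤ t i := by
        intro i hi
        have ht2 : 2 ≤ t i := by
          rcases Nat.lt_or_ge (t i) 2 with h | h
          · exfalso
            have h1 : t i = 1 := by have := ht i; omega
            exact hi (t_inj t hanti i i1 (by omega))
          · exact h
        refine ⟨?_, ht2⟩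
        rw [hTr2 i ht2]
        push_cast [Nat.cast_sub (by omega : 2 ≤ t i)]
        ring
      set P : ℕ := ∑ i, l i * (t i - 2) with hP
      have hPsum : ∑ i ∈ Finset.univ.erase i1, Tr l t i = (P : ℝ) := by
        have h1 : ∀ i ∈ Finset.univ.erase i1, Tr l t i = ((l i * (t i - 2) : ℕ) : ℝ) :=
          fun i hi => (hTother i (Finset.ne_of_mem_erase hi)).1
        rw [Finset.sum_congr rfl h1, ← Nat.cast_sum]
        norm_cast
        rw [hP]
        exact Finset.sum_erase _ (by rw [ht1]; simp)
      have hsplit : ∑ i, Tr l t i / c i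
          = (∑ i ∈ Finset.univ.erase i1, Tr l t i / c i) + (-1) / c i1 := by
        rw [← hTri1]
        exact (Finset.sum_erase_add _ _ (Finset.mem_univ i1)).symm
      have hmem0 : (⟨0, hs⟩ : Fin s) ∈ Finset.univ.erase i1 :=
        Finset.mem_erase.2 ⟨Ne.symm hi1ne0, Finset.mem_univ _⟩
      have hTrnn : ∀ i, i ≠ i1 → 0 ≤ Tr l t i := by
        intro i hi
        rw [(hTother i hi).1]
        positivity
      have hci1min : ∀ i, c i1 ≤ c i := by
        intro i
        simp only [hc]
        have h1 : (1:ℝ) ≤ (t i : ℝ) := by exact_mod_cast ht i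
        have h2 : (t i1 : ℝ) = 1 := by exact_mod_cast ht1
        linarith
      rcases Nat.lt_or_ge P 2 with hPsmall | hPbig
      · -- P ≤ 1 : the sum is strictly negative
        have hlt2 : (∑ i ∈ Finset.univ.erase i1, Tr l t i / c i)
            < ∑ i ∈ Finset.univ.erase i1, Tr l t i / c i1 := by
          apply Finset.sum_lt_sum
          · intro i hi
            exact div_le_div_left' _ _ _ (hTrnn i (Finset.ne_of_mem_erase hi)) hci1pos
              (hci1min i)
          · exact ⟨⟨0, hs⟩, hmem0, div_lt_div_left' _ _ _ hTr0pos hci1pos hci1lt0⟩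
        have hsum2 : ∑ i ∈ Finset.univ.erase i1, Tr l t i / c i1 = (P:ℝ) / c i1 := by
          rw [← Finset.sum_div, hPsum]
        rw [hsum2] at hlt2
        have hPle : (P:ℝ) ≤ 1 := by
          have : P ≤ 1 := by omega
          exact_mod_cast this
        have hlast : (P:ℝ)/c i1 + (-1)/c i1 ≤ 0 := by
          rw [← add_div]
          apply div_nonpos_of_nonpos_of_nonneg (by linarith) (le_of_lt hci1pos)
        rw [hsplit] at hf0
        linarith
      · -- P ≥ 2 : the sum is strictly positive
        set N : ℕ := ∑ j, l j * t j with hN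
        have hNc : ((N:ℝ)) = ∑ i, (l i : ℝ) * (t i : ℝ) := by
          rw [hN]; push_cast; rfl
        have hc0N : (N:ℝ) ≤ c ⟨0, hs⟩ := by
          have hterm : ∀ i ∈ Finset.univ,
              (l i : ℝ) * (t i : ℝ) / c ⟨0, hs⟩ ≤ (l i : ℝ) * (t i : ℝ) / c i := by
            intro i _
            exact div_le_div_left' _ _ _ (by positivity) (hall i) (hc0max i)
          have hsum := Finset.sum_le_sum hterm
          rw [hg, ← Finset.sum_div, ← hNc, div_le_one hc0pos] at hsum
          exact hsum
        have hsum3 : (P:ℝ) / c ⟨0, hs⟩ ≤ ∑ i ∈ Finset.univ.erase i1, Tr l t i / c i := by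
          have h0 : (P:ℝ) / c ⟨0, hs⟩ = ∑ i ∈ Finset.univ.erase i1, Tr l t i / c ⟨0, hs⟩ := by
            rw [← Finset.sum_div, hPsum]
          rw [h0]
          apply Finset.sum_le_sum
          intro i hi
          exact div_le_div_left' _ _ _ (hTrnn i (Finset.ne_of_mem_erase hi)) (hall i)
            (hc0max i)
        have hPt : t ⟨0, hs⟩ ≤ P + 2 := by
          have hle : l ⟨0, hs⟩ * (t ⟨0, hs⟩ - 2) ≤ P :=
            Finset.single_le_sum (f := fun i => l i * (t i - 2))
              (fun i _ => Nat.zero_le _) (Finset.mem_univ _)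
          have h2 : 1 * (t ⟨0, hs⟩ - 2) ≤ l ⟨0, hs⟩ * (t ⟨0, hs⟩ - 2) :=
            Nat.mul_le_mul_right _ (hl _)
          omega
        have hNt : t ⟨0, hs⟩ + 1 ≤ N := by
          have hpair : ∑ i ∈ ({⟨0, hs⟩, i1} : Finset (Fin s)), l i * t i ≤ N := by
            rw [hN]
            exact Finset.sum_le_sum_of_subset (Finset.subset_univ _)
          rw [Finset.sum_pair (Ne.symm hi1ne0)] at hpair
          have h0 : 1 * t ⟨0, hs⟩ ≤ l ⟨0, hs⟩ * t ⟨0, hs⟩ := Nat.mul_le_mul_right _ (hl _)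
          have h1' : 0 < l i1 * t i1 := Nat.mul_pos (by exact hl i1) (ht i1)
          omega
        have hkey2 := keyIneq (P:ℝ) ((t ⟨0, hs⟩ : ℕ) : ℝ) (N:ℝ)
          (by exact_mod_cast hPbig) (by exact_mod_cast hPt)
          (by exact_mod_cast hn) (by exact_mod_cast hNt)
        have hci1eq : c i1 = c ⟨0, hs⟩ - ((t ⟨0, hs⟩ : ℝ) - 1) := by
          simp only [hc]
          have h2 : (t i1 : ℝ) = 1 := by exact_mod_cast ht1
          rw [h2]; ring
        have hnum : 0 < (P:ℝ) * c i1 - c ⟨0, hs⟩ := by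
          have hPc : ((P:ℝ) - 1) * (N:ℝ) ≤ ((P:ℝ) - 1) * c ⟨0, hs⟩ := by
            apply mul_le_mul_of_nonneg_left hc0N
            have : (2:ℝ) ≤ (P:ℝ) := by exact_mod_cast hPbig
            linarith
          rw [hci1eq]
          nlinarith [hkey2, hPc]
        have hkey3 : 0 < (P:ℝ) / c ⟨0, hs⟩ - 1 / c i1 := by
          rw [div_sub_div _ _ (ne_of_gt hc0pos) (ne_of_gt hci1pos)]
          apply div_pos
          · linarith
          · exact mul_pos hc0pos hci1pos
        rw [hsplit] at hf0
        have hneg1 : (-1:ℝ) / c i1 = -(1 / c i1) := by ring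
        rw [hneg1] at hf0
        linarith
    · -- no negative class : all terms nonnegative, first positive
      push_neg at hnegcl
      have hterm : ∀ i ∈ Finset.univ, 0 ≤ Tr l t i / c i := by
        intro i _
        apply div_nonneg _ (le_of_lt (hall i))
        rcases Nat.lt_or_ge (t i) 2 with h | h
        · have h1 : t i = 1 := by have := ht i; omega
          rcases hTr1 i h1 with h' | h'
          · rw [h']
          · exact absurd h' (hnegcl i h1)
        · rw [hTr2 i h]
          have h1 : (2:ℝ) ≤ (t i : ℝ) := by exact_mod_cast h
          have h2 : (0:ℝ) ≤ (l i : ℝ) := by positivity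
          nlinarith
      have hpos : 0 < ∑ i, Tr l t i / c i := by
        apply Finset.sum_pos' hterm
        exact ⟨⟨0, hs⟩, Finset.mem_univ _, div_pos hTr0pos (hall _)⟩
      linarith
  · -- there is a negative pole-shift
    push_neg at hall
    obtain ⟨iw, hiw⟩ := hall
    have hiwneg : c iw < 0 := lt_of_le_of_ne hiw (hne iw)
    set G : Finset (Fin s) := Finset.univ.filter (fun i => c i < 0) with hG
    have hGne : G.Nonempty := ⟨iw, by simp [hG, hiwneg]⟩
    set i2 : Fin s := G.min' hGne with hi2
    have hi2neg : c i2 < 0 := (Finset.mem_filter.1 (G.min'_mem hGne)).2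
    have hlt : ∀ i, i < i2 → 0 < c i := by
      intro i hi
      have hni : i ∉ G := fun hmem => absurd (G.min'_le i hmem) (not_le.2 hi)
      have hni' : ¬ (c i < 0) := fun hci => hni (Finset.mem_filter.2 ⟨Finset.mem_univ i, hci⟩)
      exact lt_of_le_of_ne (not_lt.1 hni') (Ne.symm (hne i))
    have hge : ∀ i, i2 ≤ i → c i < 0 := by
      intro i hi
      rcases eq_or_lt_of_le hi with h | h
      · rw [← h]; exact hi2neg
      · exact lt_trans (hcmono _ _ h) hi2neg
    have hz2 : (⟨0, hs⟩ : Fin s) ≠ i2 → 0 < c ⟨0, hs⟩ := by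
      intro h
      exact hlt _ (lt_of_le_of_ne (hzero_le i2) h)
    by_cases hzi2 : (⟨0, hs⟩ : Fin s) = i2
    · -- all c negative : g < 0, contradiction
      have hneg : ∀ i ∈ Finset.univ, (l i : ℝ) * (t i : ℝ) / c i < 0 := by
        intro i _
        apply div_neg_of_pos_of_neg
        · have h1 : (1:ℝ) ≤ (l i : ℝ) := by exact_mod_cast hl i
          have h2 : (1:ℝ) ≤ (t i : ℝ) := by exact_mod_cast ht i
          nlinarith
        · exact hge i (by rw [← hzi2]; exact hzero_le i)
      have := Finset.sum_neg hneg ⟨⟨0, hs⟩, Finset.mem_univ _⟩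
      linarith
    · have hc0pos : 0 < c ⟨0, hs⟩ := hz2 hzi2
      have hi2pos : 0 < i2.val := by
        rcases Nat.eq_zero_or_pos i2.val with h | h
        · exact absurd (Fin.ext h.symm) hzi2
        · exact h
      by_cases hti2 : 3 ≤ t i2
      · -- combination certificate
        set j : Fin s := ⟨i2.val - 1, by omega⟩ with hj
        have hji2 : j < i2 := by
          rw [Fin.lt_def]; simp [hj]; omega
        have htj4 : t i2 + 1 ≤ t j := by
          have := hanti j i2 hji2
          omega
        set tj : ℝ := (t j : ℝ) with htj
        have htjR : (4:ℝ) ≤ tj := by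
          rw [htj]
          have : 4 ≤ t j := by omega
          exact_mod_cast this
        set β : ℝ := tj / (tj - 2) with hβ
        have hβpos : 0 < β := by
          apply div_pos <;> linarith
        have hE : ∑ i, ((l i : ℝ) * (t i : ℝ) - β * Tr l t i) / c i = 1 := by
          have : ∀ i : Fin s, ((l i : ℝ) * (t i : ℝ) - β * Tr l t i) / c i
              = (l i : ℝ) * (t i : ℝ) / c i - β * (Tr l t i / c i) := by
            intro i; rw [sub_div]; ring
          rw [Finset.sum_congr rfl (fun i _ => this i), Finset.sum_sub_distrib,
            ← Finset.mul_sum, hg, hf0, mul_zero, sub_zero]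
        have hterm : ∀ i ∈ Finset.univ, ((l i : ℝ) * (t i : ℝ) - β * Tr l t i) / c i ≤ 0 := by
          intro i _
          rcases lt_or_ge i i2 with hii | hii
          · -- positive denominator, t i ≥ t j
            have hcpos := hlt i hii
            have htlarge : t j ≤ t i := by
              rcases eq_or_lt_of_le (show i ≤ j from by
                rw [Fin.le_def]; simp [hj]; omega) with h | h
              · rw [h]
              · exact le_of_lt (hanti i j h)
            have ht2 : 2 ≤ t i := by omega
            apply div_nonpos_of_nonpos_of_nonneg _ (le_of_lt hcpos)
            rw [hTr2 i ht2]
            have h1 : tj ≤ (t i : ℝ) := by rw [htj]; exact_mod_cast htlarge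
            have h2 : (0:ℝ) ≤ (l i : ℝ) := by positivity
            have hkey : (t i : ℝ) - β * ((t i : ℝ) - 2) ≤ 0 := by
              rw [hβ]
              rw [div_mul_eq_mul_div, sub_nonpos, le_div_iff₀ (by linarith)]
              nlinarith
            calc (l i : ℝ) * (t i : ℝ) - β * ((l i : ℝ) * ((t i : ℝ) - 2))
                = (l i : ℝ) * ((t i : ℝ) - β * ((t i : ℝ) - 2)) := by ring
              _ ≤ 0 := mul_nonpos_of_nonneg_of_nonpos h2 hkey
          · -- negative denominator
            have hcneg := hge i hii
            have htsmall : t i ≤ t j := by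
              have h1 : t i ≤ t i2 := by
                rcases eq_or_lt_of_le hii with h | h
                · rw [← h]
                · exact le_of_lt (hanti i2 i h)
              omega
            apply div_nonpos_of_nonneg_of_nonpos _ (le_of_lt hcneg)
            rcases Nat.lt_or_ge (t i) 2 with h1 | h1
            · have ht1 : t i = 1 := by have := ht i; omega
              have h2 : (0:ℝ) ≤ (l i : ℝ) * (t i : ℝ) := by positivity
              rcases hTr1 i ht1 with h' | h'
              · rw [h', mul_zero, sub_zero]; exact h2
              · rw [h']; nlinarith [hβpos]
            · rw [hTr2 i h1]
              have h2 : (0:ℝ) ≤ (l i : ℝ) := by positivity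
              have h1' : (t i : ℝ) ≤ tj := by rw [htj]; exact_mod_cast htsmall
              have hkey : 0 ≤ (t i : ℝ) - β * ((t i : ℝ) - 2) := by
                rw [hβ]
                rw [div_mul_eq_mul_div, sub_nonneg, div_le_iff₀ (by linarith)]
                have h2' : (2:ℝ) ≤ (t i : ℝ) := by exact_mod_cast h1
                nlinarith
              calc (0:ℝ) ≤ (l i : ℝ) * ((t i : ℝ) - β * ((t i : ℝ) - 2)) :=
                    mul_nonneg h2 hkey
                _ = (l i : ℝ) * (t i : ℝ) - β * ((l i : ℝ) * ((t i : ℝ) - 2)) := by ring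
        have := Finset.sum_nonpos hterm
        linarith
      · -- sign certificate : all terms of f nonnegative, first positive
        have hterm : ∀ i ∈ Finset.univ, 0 ≤ Tr l t i / c i := by
          intro i _
          rcases lt_or_ge i i2 with hii | hii
          · have hcpos := hlt i hii
            have ht2 : 2 ≤ t i := by
              have := hanti i i2 hii
              have := ht i2
              omega
            apply div_nonneg _ (le_of_lt hcpos)
            rw [hTr2 i ht2]
            have h1 : (2:ℝ) ≤ (t i : ℝ) := by exact_mod_cast ht2
            have h2 : (0:ℝ) ≤ (l i : ℝ) := by positivity
            nlinarith
          · have hcneg := hge i hii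
            have htsmall : t i ≤ t i2 := by
              rcases eq_or_lt_of_le hii with h | h
              · rw [← h]
              · exact le_of_lt (hanti i2 i h)
            have ht2 : t i ≤ 2 := by omega
            rcases Nat.lt_or_ge (t i) 2 with h1 | h1
            · have ht1 : t i = 1 := by have := ht i; omega
              rcases hTr1 i ht1 with h' | h'
              · rw [h', zero_div]
              · rw [h']
                exact le_of_lt (div_pos_of_neg_of_neg (by norm_num) hcneg)
            · have ht2' : t i = 2 := by omega
              rw [hTr2 i h1, ht2']
              norm_num
        have hpos : 0 < ∑ i, Tr l t i / c i := by
          apply Finset.sum_pos' hterm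
          refine ⟨⟨0, hs⟩, Finset.mem_univ _, div_pos hTr0pos ?_⟩
          apply hlt
          exact lt_of_le_of_ne (hzero_le i2) hzi2
        linarith

lemma certC (hanti : ∀ i j : Fin s, i < j → t j < t i) (hl : ∀ i, 1 ≤ l i)
    (ht : ∀ i, 1 ≤ t i) (hn : 9 ≤ ∑ j, l j * t j) (hs : 0 < s)
    (h1 : t ⟨0, hs⟩ = 1) (μ : ℝ) (hne : ∀ i, μ + (t i : ℝ) ≠ 0)
    (hg : ∑ i, (l i : ℝ) * (t i : ℝ) / (μ + (t i : ℝ)) = 1) :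
    ∑ i, Tr l t i / (μ + (t i : ℝ)) ≠ 0 := by
  have hs1 : s = 1 := by
    by_contra hne1
    have hs2 : 2 ≤ s := by omega
    have := hanti ⟨0, hs⟩ ⟨1, by omega⟩ (by simp [Fin.lt_def])
    have := ht ⟨1, by omega⟩
    omega
  subst hs1
  rw [Fin.sum_univ_one] at hg hn ⊢
  have h0 : (0 : Fin 1) = ⟨0, hs⟩ := rfl
  rw [h0] at hg hn ⊢
  rw [h1, Nat.mul_one] at hn
  apply div_ne_zero _ (hne _)
  by_cases hp : l ⟨0, hs⟩ % 2 = 1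
  · rw [Tr_t1_odd l t ht _ h1 hp]; norm_num
  · rw [Tr_t1_even_sp l t ht _ h1 (by omega) (Or.inl rfl) (by omega)]; norm_num

lemma certB (hanti : ∀ i j : Fin s, i < j → t j < t i) (hl : ∀ i, 1 ≤ l i)
    (ht : ∀ i, 1 ≤ t i) (hn : 9 ≤ ∑ j, l j * t j) (hs : 0 < s)
    (h2 : t ⟨0, hs⟩ = 2) (μ : ℝ) (hne : ∀ i, μ + (t i : ℝ) ≠ 0)
    (hg : ∑ i, (l i : ℝ) * (t i : ℝ) / (μ + (t i : ℝ)) = 1) :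
    ∑ i, Tr l t i / (μ + (t i : ℝ)) ≠ 0 := by
  have hsle : s ≤ 2 := by
    by_contra hgt
    have hs3 : 3 ≤ s := by omega
    have ha := hanti ⟨0, hs⟩ ⟨1, by omega⟩ (by simp [Fin.lt_def])
    have hb := hanti ⟨1, by omega⟩ ⟨2, by omega⟩ (by simp [Fin.lt_def])
    have := ht ⟨2, by omega⟩
    omega
  rcases Nat.lt_or_ge s 2 with hs1 | hs2
  · -- s = 1
    have hs1' : s = 1 := by omega
    subst hs1'
    rw [Fin.sum_univ_one] at hn ⊢
    have h0 : (0 : Fin 1) = ⟨0, hs⟩ := rfl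
    rw [h0] at hn ⊢
    rw [h2] at hn
    apply div_ne_zero _ (hne _)
    have hodd : ¬ oddOne l t := by
      rintro ⟨i, hi, -⟩
      have : i = ⟨0, hs⟩ := Subsingleton.elim _ _
      rw [this, h2] at hi; omega
    rw [Tr_B3 l t ht _ rfl h2 hodd (by omega)]
    norm_num
  · -- s = 2
    have hs2' : s = 2 := by omega
    subst hs2'
    have h01 : ((0 : Fin 2)) = ⟨0, hs⟩ := rfl
    have ht0 : t 0 = 2 := by rw [h01]; exact h2
    have ht1 : t 1 = 1 := by
      have := hanti 0 1 (by simp [Fin.lt_def])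
      have := ht 1
      omega
    rw [Fin.sum_univ_two] at hg hn ⊢
    rw [ht0, ht1] at hn
    set c0 : ℝ := μ + (t 0 : ℝ) with hc0
    set c1 : ℝ := μ + (t 1 : ℝ) with hc1
    have hc0ne : c0 ≠ 0 := hne 0
    have hc1ne : c1 ≠ 0 := hne 1
    have hc01 : c0 = c1 + 1 := by
      rw [hc0, hc1, ht0, ht1]; push_cast; ring
    by_cases hp : l 1 % 2 = 1
    · -- negative last class
      have hTr1 : Tr l t 1 = -1 := Tr_t1_odd l t ht 1 ht1 hp
      have hoo : oddOne l t := ⟨1, ht1, hp⟩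
      by_cases hl02 : l 0 = 2
      · -- pair (2, -1)
        have hTr0 : Tr l t 0 = 2 := Tr_B2 l t ht 0 rfl ht0 hl02
        rw [hTr0, hTr1]
        rcases lt_trichotomy c1 0 with hc1s | hc1s | hc1s
        · rcases lt_trichotomy c0 0 with hc0s | hc0s | hc0s
          · -- both negative : g < 0
            exfalso
            have hm0 : (0:ℝ) < (l 0 : ℝ) * (t 0 : ℝ) := by
              apply mul_pos
              · exact_mod_cast hl 0
              · exact_mod_cast ht 0
            have hm1 : (0:ℝ) < (l 1 : ℝ) * (t 1 : ℝ) := by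
              apply mul_pos
              · exact_mod_cast hl 1
              · exact_mod_cast ht 1
            have hA := div_neg_of_pos_of_neg hm0 hc0s
            have hB := div_neg_of_pos_of_neg hm1 hc1s
            linarith [hg]
          · exact absurd hc0s hc0ne
          · -- c0 > 0 > c1 : both terms positive
            have hA : 0 < 2 / c0 := by positivity
            have hB : 0 < (-1) / c1 := div_pos_of_neg_of_neg (by norm_num) hc1s
            intro hzz; linarith
        · exact absurd hc1s hc1ne
        · -- both positive : use the size bound
          have hc0s : 0 < c0 := by rw [hc01]; linarith
          have hterm : (l 1 : ℝ) * (t 1 : ℝ) / c0 ≤ (l 1 : ℝ) * (t 1 : ℝ) / c1 :=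
            div_le_div_left' _ _ _ (by positivity) hc1s (by rw [hc01]; linarith)
          have hsum : ((l 0 : ℝ) * (t 0 : ℝ) + (l 1 : ℝ) * (t 1 : ℝ)) / c0 ≤ 1 := by
            rw [add_div]
            linarith [hg, hterm]
          have e0 : (l 0 : ℝ) = 2 := by exact_mod_cast hl02
          have e1 : (t 0 : ℝ) = 2 := by exact_mod_cast ht0
          have e2 : (t 1 : ℝ) = 1 := by exact_mod_cast ht1
          have h9 : (9:ℝ) ≤ (l 0 : ℝ) * (t 0 : ℝ) + (l 1 : ℝ) * (t 1 : ℝ) := by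
            rw [e0, e1, e2]
            have h9' : (9:ℕ) ≤ 4 + l 1 := by omega
            have : (9:ℝ) ≤ 4 + (l 1 : ℝ) := by exact_mod_cast h9'
            linarith
          have hc0ge : (9:ℝ) ≤ c0 := by
            rw [div_le_one hc0s] at hsum
            linarith
          have hid : 2 / c0 + (-1) / c1 = (c0 - 2) / (c0 * c1) := by
            rw [hc01]
            field_simp
            ring
          intro hzz
          rw [hid] at hzz
          have : 0 < (c0 - 2) / (c0 * c1) :=
            div_pos (by linarith) (mul_pos hc0s hc1s)
          linarith
      · -- Tr 0 = 0
        have hTr0 : Tr l t 0 = 0 := by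
          have h0' := Tr_main l t hl ht 0 (by omega)
            (by rintro ⟨-, -, hh⟩; exact hl02 hh)
            (by rintro ⟨-, -, hno, -⟩; exact hno hoo)
          rw [h0']
          have e1 : (t 0 : ℝ) = 2 := by exact_mod_cast ht0
          rw [e1]; ring
        rw [hTr0, hTr1, zero_div, zero_add]
        exact div_ne_zero (by norm_num) hc1ne
    · -- even last class
      by_cases hl01 : l 0 = 1
      · have hsp : topSp l t := Or.inr ⟨0, rfl, ht0, hl01⟩
        have hTr1 : Tr l t 1 = 2 := by
          apply Tr_t1_even_sp l t ht 1 ht1 (by omega) hsp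
          have := hl 1; omega
        have hTr0 : Tr l t 0 = 0 := by
          have h0' := Tr_main l t hl ht 0 (by omega)
            (by rintro ⟨-, -, hh⟩; omega)
            (by rintro ⟨-, -, -, hh⟩; omega)
          rw [h0']
          have e1 : (t 0 : ℝ) = 2 := by exact_mod_cast ht0
          rw [e1]; ring
        rw [hTr0, hTr1, zero_div, zero_add]
        exact div_ne_zero (by norm_num) hc1ne
      · have hsp : ¬ topSp l t := by
          rintro (hh | ⟨i0, hv, hti0, hli0⟩)
          · omega
          · have : i0 = 0 := Fin.ext hv
            rw [this] at hli0
            exact hl01 hli0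
        have hTr1 : Tr l t 1 = 0 := Tr_t1_even_nsp l t ht 1 ht1 (by omega) hsp
        have hoo : ¬ oddOne l t := by
          rintro ⟨i, hi, hip⟩
          have hcase : i = 0 ∨ i = 1 := by
            rcases i with ⟨iv, hiv⟩
            interval_cases iv
            · exact Or.inl rfl
            · exact Or.inr rfl
          rcases hcase with h | h
          · rw [h, ht0] at hi; omega
          · rw [h] at hip; exact hp hip
        have hTr0 : Tr l t 0 = 2 := by
          by_cases hl02 : l 0 = 2
          · exact Tr_B2 l t ht 0 rfl ht0 hl02
          · have hl03 : 3 ≤ l 0 := by have := hl 0; omega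
            exact Tr_B3 l t ht 0 rfl ht0 hoo hl03
        rw [hTr0, hTr1, zero_div, add_zero]
        exact div_ne_zero (by norm_num) hc0ne

lemma certAll (hanti : ∀ i j : Fin s, i < j → t j < t i) (hl : ∀ i, 1 ≤ l i)
    (ht : ∀ i, 1 ≤ t i) (hn : 9 ≤ ∑ j, l j * t j) (hs : 0 < s)
    (μ : ℝ) (hne : ∀ i, μ + (t i : ℝ) ≠ 0)
    (hg : ∑ i, (l i : ℝ) * (t i : ℝ) / (μ + (t i : ℝ)) = 1) :
    ∑ i, Tr l t i / (μ + (t i : ℝ)) ≠ 0 := by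
  rcases Nat.lt_or_ge (t ⟨0, hs⟩) 3 with hlt | hge
  · rcases Nat.lt_or_ge (t ⟨0, hs⟩) 2 with hlt1 | hge2
    · exact certC l t hanti hl ht hn hs (by have := ht ⟨0, hs⟩; omega) μ hne hg
    · exact certB l t hanti hl ht hn hs (by omega) μ hne hg
  · exact certA l t hanti hl ht hn hs hge μ hne hg

end CertA

end Stmt12


open Matrix Finset
set_option linter.unusedSectionVars false
set_option maxHeartbeats 1000000

namespace Stmt12

lemma sum_delta_val {m : ℕ} (q : Fin m) (G : Fin m → ℝ) :
    ∑ q' : Fin m, (if q'.val = q.val then G q' else 0) = G q := by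
  have h : ∀ q' : Fin m, (if q'.val = q.val then G q' else 0)
      = (if q' = q then G q' else 0) := by
    intro q'
    by_cases h' : q' = q
    · rw [if_pos h', if_pos (by rw [h'])]
    · rw [if_neg h', if_neg (fun hv => h' (Fin.ext hv))]
  rw [Finset.sum_congr rfl (fun q' _ => h q'), Finset.sum_ite_eq' Finset.univ q G]
  simp

lemma sum_delta_nat {m : ℕ} (j : ℕ) (hj : j < m) (G : Fin m → ℝ) :
    ∑ a : Fin m, (if a.val = j then G a else 0) = G ⟨j, hj⟩ := by
  have h := sum_delta_val (⟨j, hj⟩ : Fin m) G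
  exact h


lemma sum_neg_ind_eq (m k : ℕ) (hk : k < m) :
    ∑ a : Fin m, (if a.val = k then (-1:ℝ) else 0) = -1 := by
  have e2 : ∀ a : Fin m, (if a.val = k then (-1:ℝ) else 0)
      = -(if a.val = k then (1:ℝ) else 0) := by
    intro a; split_ifs <;> ring
  rw [Finset.sum_congr rfl (fun a _ => e2 a), Finset.sum_neg_distrib, sum_ind_eq m k hk]

lemma sum_ind_pair (m j k : ℕ) (hj : j < m) (hk : k < m) (hjk : j ≠ k) :
    ∑ a : Fin m, (if a.val = j then (1:ℝ) else if a.val = k then -1 else 0) = 0 := by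
  have e : ∀ a : Fin m, (if a.val = j then (1:ℝ) else if a.val = k then -1 else 0)
      = (if a.val = j then (1:ℝ) else 0) + (if a.val = k then (-1:ℝ) else 0) := by
    intro a
    by_cases h1 : a.val = j
    · rw [if_pos h1, if_pos h1, if_neg (by omega), add_zero]
    · rw [if_neg h1, if_neg h1, zero_add]
  rw [Finset.sum_congr rfl (fun a _ => e a), Finset.sum_add_distrib, sum_ind_eq m j hj,
    sum_neg_ind_eq m k hk]
  ring

variable {s : ℕ} (l t : Fin s → ℕ)

lemma sum_part_single (i : Fin s) (q : Fin (l i)) (G : PartIdx l → ℝ) :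
    ∑ p : PartIdx l, (if p.1 = i ∧ p.2.val = q.val then G p else 0) = G ⟨i, q⟩ := by
  rw [sum_part l (fun p => if p.1 = i ∧ p.2.val = q.val then G p else 0)]
  rw [Finset.sum_eq_single_of_mem i (Finset.mem_univ i) ?h0]
  case h0 =>
    intro b _ hb
    apply Finset.sum_eq_zero
    intro q' _
    rw [if_neg (fun hc => hb hc.1)]
  have e : ∀ q' : Fin (l i),
      (if ((⟨i, q'⟩ : PartIdx l).1 = i ∧ ((⟨i, q'⟩ : PartIdx l)).2.val = q.val)
        then G ⟨i, q'⟩ else 0)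
      = (if q'.val = q.val then G ⟨i, q'⟩ else 0) := by
    intro q'
    by_cases h : q'.val = q.val
    · rw [if_pos ⟨rfl, h⟩, if_pos h]
    · rw [if_neg (fun hc => h hc.2), if_neg h]
  rw [Finset.sum_congr rfl (fun q' _ => e q')]
  exact sum_delta_val q (fun q' => G ⟨i, q'⟩)

lemma sum_part_pair (i' : Fin s) (q1 q2 : Fin (l i')) (hv : q1.val ≠ q2.val)
    (G : PartIdx l → ℝ) :
    ∑ p : PartIdx l, G p * (if p.1 = i' ∧ p.2.val = q1.val then 1
        else if p.1 = i' ∧ p.2.val = q2.val then -1 else 0)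
      = G ⟨i', q1⟩ - G ⟨i', q2⟩ := by
  have e : ∀ p : PartIdx l, G p * (if p.1 = i' ∧ p.2.val = q1.val then 1
        else if p.1 = i' ∧ p.2.val = q2.val then -1 else 0)
      = (if p.1 = i' ∧ p.2.val = q1.val then G p else 0)
        + (if p.1 = i' ∧ p.2.val = q2.val then -G p else 0) := by
    intro p
    by_cases h1 : p.1 = i' ∧ p.2.val = q1.val
    · rw [if_pos h1, if_pos h1, if_neg (fun hc => hv (h1.2.symm.trans hc.2)), mul_one,
        add_zero]
    · rw [if_neg h1, if_neg h1, zero_add]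
      by_cases h2 : p.1 = i' ∧ p.2.val = q2.val
      · rw [if_pos h2, if_pos h2]; ring
      · rw [if_neg h2, if_neg h2, mul_zero]
  rw [Finset.sum_congr rfl (fun p _ => e p), Finset.sum_add_distrib,
    sum_part_single l i' q1 G, sum_part_single l i' q2 (fun p => -G p)]
  ring

lemma cmA_eq :
    (cmGraph l t).adjMatrix ℝ
      = (SimpleGraph.completeMultipartiteGraph
          (fun p : PartIdx l => Fin (t p.1))).adjMatrix ℝ := by
  ext a b
  by_cases h : a.1 = b.1 <;>
    simp only [SimpleGraph.adjMatrix_apply] <;> split_ifs <;> simp_all [cmGraph]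

lemma cmA_mulVec (w : MV l t → ℝ) (u : MV l t) :
    ((cmGraph l t).adjMatrix ℝ).mulVec w u
      = (∑ x, w x) - ∑ a : Fin (t u.1.1), w ⟨u.1, a⟩ := by
  rw [cmA_eq]
  exact cm_mulVec l t w u

end Stmt12

open Stmt12


/-- Every complete multipartite graph `K_{l_1*t_1, …, l_s*t_s}` on at
least `9` vertices admits a switching about some vertex set `X` such that every eigenvalue
of the switched adjacency matrix is main. -/
theorem stmt12 {s : ℕ} (l t : Fin s → ℕ)
    (hanti : ∀ i j : Fin s, i < j → t j < t i) (hl : ∀ i, 1 ≤ l i) (ht : ∀ i, 1 ≤ t i)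
    (hcard : 9 ≤ Fintype.card (MV l t)) :
    ∃ X : Finset (MV l t), ∀ μ : ℝ,
      (∃ v : MV l t → ℝ, v ≠ 0 ∧
        (switchMatrix X ((cmGraph l t).adjMatrix ℝ)).mulVec v = μ • v) →
      (∃ v : MV l t → ℝ, v ≠ 0 ∧
        (switchMatrix X ((cmGraph l t).adjMatrix ℝ)).mulVec v = μ • v ∧ ∑ u, v u ≠ 0) := by
  classical
  -- basic counting
  have hcard_eq : Fintype.card (MV l t) = ∑ i, l i * t i := by
    rw [Fintype.card_sigma]
    have h1 : ∀ p : PartIdx l, Fintype.card (Fin (t p.1)) = t p.1 := fun p => Fintype.card_fin _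
    rw [Finset.sum_congr rfl (fun p _ => h1 p)]
    rw [sum_part l (fun p => t p.1)]
    apply Finset.sum_congr rfl
    intro i _
    have h2 : ∀ q : Fin (l i), t (⟨i, q⟩ : PartIdx l).1 = t i := fun q => rfl
    rw [Finset.sum_congr rfl (fun q _ => h2 q), Finset.sum_const, Finset.card_univ,
      Fintype.card_fin, smul_eq_mul, mul_comm]
  have hn : 9 ≤ ∑ i, l i * t i := by rw [← hcard_eq]; exact hcard
  have hs : 0 < s := by
    by_contra h
    have hs0 : s = 0 := by omega
    subst hs0
    simp at hn
  have hA := cmA_mulVec l t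
  refine ⟨XX l t, ?_⟩
  rintro μ ⟨v, hv0, hv⟩
  set d : MV l t → ℝ := sgn (XX l t) with hd
  have hswm : switchMatrix (XX l t) ((cmGraph l t).adjMatrix ℝ)
      = swM (XX l t) ((cmGraph l t).adjMatrix ℝ) := rfl
  rw [hswm] at hv ⊢
  set A := (cmGraph l t).adjMatrix ℝ with hAdef
  set w : MV l t → ℝ := fun u => d u * v u with hw
  have hweig : A.mulVec w = μ • w := eigen_transfer _ _ _ _ hv
  have hwne : w ≠ 0 := mul_ne_zero_fun _ _ hv0
  suffices hS : ∃ w' : MV l t → ℝ, w' ≠ 0 ∧ A.mulVec w' = μ • w' ∧ ∑ u, d u * w' u ≠ 0 by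
    obtain ⟨w', hw'0, hw'e, hw's⟩ := hS
    exact ⟨fun u => d u * w' u, mul_ne_zero_fun _ _ hw'0,
      eigen_transfer' _ _ _ _ hw'e, hw's⟩
  -- part sums
  set σ : PartIdx l → ℝ := fun p => ∑ a : Fin (t p.1), w ⟨p, a⟩ with hσ
  set S : ℝ := ∑ u, w u with hSdef
  have heq : ∀ u : MV l t, μ * w u = S - σ u.1 := by
    intro u
    have h1 := congrFun hweig u
    rw [hA w u] at h1
    have h2 : (μ • w) u = μ * w u := rfl
    rw [h2] at h1
    rw [← h1]
  obtain ⟨u0, hu0⟩ : ∃ u0 : MV l t, w u0 ≠ 0 := by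
    by_contra hcon
    push_neg at hcon
    exact hwne (funext fun u => hcon u)
  by_cases hμ0 : μ = 0
  · -- zero eigenvalue
    have hσS : ∀ p : PartIdx l, σ p = S := by
      intro p
      have h1 := heq ⟨p, ⟨0, ht p.1⟩⟩
      rw [hμ0, zero_mul] at h1
      linarith
    by_cases hpp : ∀ p q : PartIdx l, p = q
    · -- a single part : the graph is empty, use d itself
      have hAdj : ∀ u x : MV l t, ¬ (cmGraph l t).Adj u x := by
        intro u x h
        exact h (hpp u.1 x.1)
      refine ⟨d, ?_, ?_, ?_⟩
      · intro hcon
        have h1 := congrFun hcon ⟨⟨⟨0, hs⟩, ⟨0, hl _⟩⟩, ⟨0, ht _⟩⟩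
        simp only [Pi.zero_apply] at h1
        exact sgn_ne_zero (XX l t) _ h1
      · funext u
        have h1 : A.mulVec d u = 0 := by
          rw [hAdef]
          simp only [mulVec, dotProduct]
          apply Finset.sum_eq_zero
          intro x _
          rw [SimpleGraph.adjMatrix_apply, if_neg (hAdj u x), zero_mul]
        rw [h1, hμ0]
        simp
      · have h1 : ∑ u, d u * d u = (Fintype.card (MV l t) : ℝ) := by
          rw [Finset.sum_congr rfl (fun u _ => sgn_sq (XX l t) u), Finset.sum_const,
            Finset.card_univ, nsmul_eq_mul, mul_one]
        rw [h1]
        have h2 : (9:ℝ) ≤ (Fintype.card (MV l t) : ℝ) := by exact_mod_cast hcard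
        linarith
    · -- at least two parts
      push_neg at hpp
      have hS0 : S = 0 := by
        have h1 : S = ∑ p : PartIdx l, σ p := by
          rw [hSdef, sum_mv l t w]
        have h2 : ∑ p : PartIdx l, σ p = (Fintype.card (PartIdx l) : ℝ) * S := by
          rw [Finset.sum_congr rfl (fun p _ => hσS p), Finset.sum_const, Finset.card_univ,
            nsmul_eq_mul]
        have hc2 : 2 ≤ Fintype.card (PartIdx l) := by
          obtain ⟨p, q, hpq⟩ := hpp
          exact Fintype.one_lt_card_iff.2 ⟨p, q, hpq⟩
        have hcR : (2:ℝ) ≤ (Fintype.card (PartIdx l) : ℝ) := by exact_mod_cast hc2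
        have h3 : S = (Fintype.card (PartIdx l) : ℝ) * S := h1.trans h2
        rcases lt_trichotomy S 0 with h | h | h
        · nlinarith
        · exact h
        · nlinarith
      have hσ0 : ∀ p : PartIdx l, σ p = 0 := fun p => (hσS p).trans hS0
      obtain ⟨⟨iu, qu⟩, au⟩ := u0
      have ht2 : 2 ≤ t iu := by
        by_contra hcon
        have ht1 : t iu = 1 := by have := ht iu; omega
        have e : t ((⟨iu, qu⟩ : PartIdx l)).1 = t iu := rfl
        have hall : ∀ a : Fin (t ((⟨iu, qu⟩ : PartIdx l)).1), a = au := by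
          intro a
          apply Fin.ext
          have h1 := a.isLt
          have h2 := au.isLt
          omega
        have hcongr : ∀ a ∈ Finset.univ, w ⟨⟨iu, qu⟩, a⟩ = w ⟨⟨iu, qu⟩, au⟩ :=
          fun a _ => by rw [hall a]
        have h3 : σ ⟨iu, qu⟩ = (t ((⟨iu, qu⟩ : PartIdx l)).1 : ℕ) • w ⟨⟨iu, qu⟩, au⟩ := by
          rw [hσ]
          simp only
          rw [Finset.sum_congr rfl hcongr, Finset.sum_const, Finset.card_univ,
            Fintype.card_fin]
        rw [hσ0 ⟨iu, qu⟩] at h3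
        rw [show t ((⟨iu, qu⟩ : PartIdx l)).1 = 1 from ht1, one_smul] at h3
        exact hu0 h3.symm
      have htop : 2 ≤ t ⟨0, hs⟩ := by
        have h1 : t iu ≤ t ⟨0, hs⟩ := by
          rcases eq_or_ne iu ⟨0, hs⟩ with h | h
          · rw [h]
          · have hlt' : (⟨0, hs⟩ : Fin s) < iu :=
              lt_of_le_of_ne (by simp [Fin.le_def]) (Ne.symm h)
            exact le_of_lt (hanti _ _ hlt')
        omega
      obtain ⟨i, q, hx1, hx2⟩ := xx_nonconst l t hl ht hs htop
      set k : ℕ := xx l t i q with hk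
      have hti0 : 0 < t i := by omega
      set w2 : MV l t → ℝ := fun u =>
        if u.1.1 = i ∧ u.1.2.val = q.val then
          (if u.2.val = 0 then 1 else if u.2.val = k then -1 else 0) else 0 with hw2
      have hδ : ∀ p : PartIdx l, ∀ a : Fin (t p.1), w2 ⟨p, a⟩
          = (if p.1 = i ∧ p.2.val = q.val then
              (if a.val = 0 then (1:ℝ) else if a.val = k then -1 else 0) else 0) :=
        fun p a => rfl
      have hσ2 : ∀ p : PartIdx l, (∑ a : Fin (t p.1), w2 ⟨p, a⟩) = 0 := by
        intro p
        rw [Finset.sum_congr rfl (fun a _ => hδ p a)]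
        by_cases hc : p.1 = i ∧ p.2.val = q.val
        · have hcongr : ∀ a ∈ Finset.univ, (if p.1 = i ∧ p.2.val = q.val then
              (if (a : Fin (t p.1)).val = 0 then (1:ℝ) else if a.val = k then -1 else 0)
                else 0)
              = (if (a : Fin (t p.1)).val = 0 then (1:ℝ) else if a.val = k then -1 else 0) :=
            fun a _ => if_pos hc
          rw [Finset.sum_congr rfl hcongr]
          have hti : t p.1 = t i := by rw [hc.1]
          exact sum_ind_pair (t p.1) 0 k (by rw [hti]; omega) (by rw [hti]; omega)
            (by omega)
        · have hcongr : ∀ a ∈ Finset.univ, (if p.1 = i ∧ p.2.val = q.val then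
              (if (a : Fin (t p.1)).val = 0 then (1:ℝ) else if a.val = k then -1 else 0)
                else 0) = 0 := fun a _ => if_neg hc
          rw [Finset.sum_congr rfl hcongr]
          exact Finset.sum_const_zero
      have hS2 : (∑ u, w2 u) = 0 := by
        rw [sum_mv l t w2, Finset.sum_congr rfl (fun p _ => hσ2 p)]
        exact Finset.sum_const_zero
      refine ⟨w2, ?_, ?_, ?_⟩
      · intro hcon
        have h1 := congrFun hcon ⟨⟨i, q⟩, ⟨0, hti0⟩⟩
        simp only [Pi.zero_apply] at h1
        have h2 : w2 ⟨⟨i, q⟩, ⟨0, hti0⟩⟩ = 1 := by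
          have h3 : ((⟨⟨i, q⟩, ⟨0, hti0⟩⟩ : MV l t)).2.val = 0 := rfl
          exact (if_pos ⟨rfl, rfl⟩).trans (if_pos h3)
        rw [h1] at h2
        norm_num at h2
      · funext u
        rw [hA w2 u, hS2, hσ2 u.1, hμ0]
        simp
      · have hcalc : ∑ u, d u * w2 u
            = (∑ a : Fin (t i), d ⟨⟨i, q⟩, a⟩
                * (if a.val = 0 then (1:ℝ) else if a.val = k then -1 else 0)) := by
          rw [sum_mv l t (fun u => d u * w2 u)]
          have h1 : ∀ p : PartIdx l, (∑ a : Fin (t p.1), d ⟨p, a⟩ * w2 ⟨p, a⟩)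
              = (if p.1 = i ∧ p.2.val = q.val then
                  (∑ a : Fin (t p.1), d ⟨p, a⟩
                    * (if a.val = 0 then (1:ℝ) else if a.val = k then -1 else 0)) else 0) := by
            intro p
            by_cases hc : p.1 = i ∧ p.2.val = q.val
            · rw [if_pos hc]
              apply Finset.sum_congr rfl
              intro a _
              rw [hδ p a, if_pos hc]
            · rw [if_neg hc]
              apply Finset.sum_eq_zero
              intro a _
              rw [hδ p a, if_neg hc, mul_zero]
          rw [Finset.sum_congr rfl (fun p _ => h1 p)]
          exact sum_part_single l i q (fun p => ∑ a : Fin (t p.1), d ⟨p, a⟩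
            * (if a.val = 0 then (1:ℝ) else if a.val = k then -1 else 0))
        have heval : (∑ a : Fin (t i), d ⟨⟨i, q⟩, a⟩
            * (if a.val = 0 then (1:ℝ) else if a.val = k then -1 else 0)) = -2 := by
          have e : ∀ a : Fin (t i), d ⟨⟨i, q⟩, a⟩
              * (if a.val = 0 then (1:ℝ) else if a.val = k then -1 else 0)
              = (if a.val = 0 then d ⟨⟨i, q⟩, a⟩ else 0)
                + (if a.val = k then -d ⟨⟨i, q⟩, a⟩ else 0) := by
            intro a
            by_cases h1 : a.val = 0
            · rw [if_pos h1, if_pos h1, if_neg (by omega), mul_one, add_zero]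
            · rw [if_neg h1, if_neg h1, zero_add]
              by_cases h2 : a.val = k
              · rw [if_pos h2, if_pos h2]; ring
              · rw [if_neg h2, if_neg h2, mul_zero]
          rw [Finset.sum_congr rfl (fun a _ => e a), Finset.sum_add_distrib,
            sum_delta_nat 0 hti0 (fun a => d ⟨⟨i, q⟩, a⟩),
            sum_delta_nat k hx2 (fun a => -d ⟨⟨i, q⟩, a⟩)]
          have hd1 : d ⟨⟨i, q⟩, ⟨0, hti0⟩⟩ = -1 := by
            rw [hd, sgn_XX]
            exact if_pos hx1
          have hd2 : d ⟨⟨i, q⟩, ⟨k, hx2⟩⟩ = 1 := by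
            rw [hd, sgn_XX]
            exact if_neg (show ¬ (k < k) from by omega)
          simp only [hd1, hd2]
          norm_num
        rw [hcalc, heval]
        norm_num
  · -- μ ≠ 0 : w is constant on parts
    have hwc : ∀ (p : PartIdx l) (a b : Fin (t p.1)), w ⟨p, a⟩ = w ⟨p, b⟩ := by
      intro p a b
      have h1 := heq ⟨p, a⟩
      have h2 := heq ⟨p, b⟩
      have := h1.trans h2.symm
      exact mul_left_cancel₀ hμ0 this
    set cc : (p : PartIdx l) → ℝ := fun p => w ⟨p, ⟨0, ht p.1⟩⟩ with hccdef
    have hwcc : ∀ (p : PartIdx l) (a : Fin (t p.1)), w ⟨p, a⟩ = cc p :=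
      fun p a => hwc p a ⟨0, ht p.1⟩
    have hσc : ∀ p : PartIdx l, σ p = (t p.1 : ℝ) * cc p := by
      intro p
      rw [hσ]
      simp only
      rw [Finset.sum_congr rfl (fun a _ => hwcc p a), Finset.sum_const,
        Finset.card_univ, Fintype.card_fin, nsmul_eq_mul]
    have heq2 : ∀ p : PartIdx l, (μ + (t p.1 : ℝ)) * cc p = S := by
      intro p
      have h1 := heq ⟨p, ⟨0, ht p.1⟩⟩
      rw [hσc p] at h1
      have h2 : w ⟨p, ⟨0, ht p.1⟩⟩ = cc p := rfl
      rw [h2] at h1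
      have h3 : (μ + (t p.1 : ℝ)) * cc p = μ * cc p + (t p.1 : ℝ) * cc p := by ring
      rw [h3]
      linarith
    have hScc : S = ∑ p : PartIdx l, (t p.1 : ℝ) * cc p := by
      rw [hSdef, sum_mv l t w]
      exact Finset.sum_congr rfl (fun p _ => by rw [← hσc p])
    by_cases hres : ∃ i', μ = -(t i' : ℝ)
    · obtain ⟨i', hi'⟩ := hres
      have hzero : μ + (t i' : ℝ) = 0 := by rw [hi']; ring
      have hS0 : S = 0 := by
        have h1 := heq2 ⟨i', ⟨0, hl i'⟩⟩
        have h0 : μ + (t ((⟨i', ⟨0, hl i'⟩⟩ : PartIdx l)).1 : ℝ) = 0 := hzero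
        rw [h0, zero_mul] at h1
        exact h1.symm
      have hcc0 : ∀ p : PartIdx l, p.1 ≠ i' → cc p = 0 := by
        intro p hp
        have h1 := heq2 p
        rw [hS0] at h1
        rcases mul_eq_zero.1 h1 with h2 | h2
        · exfalso
          apply hp
          apply t_inj t hanti
          have h3 : (t p.1 : ℝ) = (t i' : ℝ) := by
            rw [hi'] at h2; linarith
          exact_mod_cast h3
        · exact h2
      obtain ⟨⟨iu, qu⟩, au⟩ := u0
      have hu0cc : cc ⟨iu, qu⟩ ≠ 0 := by
        intro h
        exact hu0 (by rw [hwcc ⟨iu, qu⟩ au, h])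
      have hcls : iu = i' := by
        by_contra hne2
        exact hu0cc (hcc0 ⟨iu, qu⟩ hne2)
      subst hcls
      have hsum0 : ∑ q : Fin (l iu), cc ⟨iu, q⟩ = 0 := by
        have h1 : ∑ p : PartIdx l, (t p.1 : ℝ) * cc p = 0 := by rw [← hScc, hS0]
        rw [sum_part l (fun p => (t p.1 : ℝ) * cc p)] at h1
        rw [Finset.sum_eq_single_of_mem iu (Finset.mem_univ iu) ?hz] at h1
        case hz =>
          intro b _ hb
          apply Finset.sum_eq_zero
          intro q' _
          rw [hcc0 ⟨b, q'⟩ hb, mul_zero]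
        have e : ∀ q : Fin (l iu), (t ((⟨iu, q⟩ : PartIdx l)).1 : ℝ) * cc ⟨iu, q⟩
            = (t iu : ℝ) * cc ⟨iu, q⟩ := fun q => rfl
        rw [Finset.sum_congr rfl (fun q _ => e q), ← Finset.mul_sum] at h1
        have htne : (t iu : ℝ) ≠ 0 := by
          have := ht iu
          positivity
        rcases mul_eq_zero.1 h1 with h | h
        · exact absurd h htne
        · exact h
      have hl2 : 2 ≤ l iu := by
        by_contra hcon
        have hl1 : l iu = 1 := by have := hl iu; omega
        have hall : ∀ q : Fin (l iu), q = qu := by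
          intro q
          apply Fin.ext
          have h1 := q.isLt
          have h2 := qu.isLt
          omega
        have hcongr : ∀ q ∈ Finset.univ, cc ⟨iu, q⟩ = cc ⟨iu, qu⟩ :=
          fun q _ => by rw [hall q]
        have h3 : ∑ q : Fin (l iu), cc ⟨iu, q⟩ = (l iu : ℕ) • cc ⟨iu, qu⟩ := by
          rw [Finset.sum_congr rfl hcongr, Finset.sum_const,
            Finset.card_univ, Fintype.card_fin]
        rw [h3, hl1, one_smul] at hsum0
        exact hu0cc hsum0
      obtain ⟨q1, q2, hq⟩ := tau_uneq l t hanti hl ht hn iu hl2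
      have hq12 : q1.val ≠ q2.val := by
        intro h
        exact hq (by rw [Fin.ext h])
      set w2 : MV l t → ℝ := fun u =>
        if u.1.1 = iu ∧ u.1.2.val = q1.val then 1
        else if u.1.1 = iu ∧ u.1.2.val = q2.val then -1 else 0 with hw2
      have hδ : ∀ p : PartIdx l, ∀ a : Fin (t p.1), w2 ⟨p, a⟩
          = (if p.1 = iu ∧ p.2.val = q1.val then (1:ℝ)
            else if p.1 = iu ∧ p.2.val = q2.val then -1 else 0) := fun p a => rfl
      have hσ2 : ∀ p : PartIdx l, (∑ a : Fin (t p.1), w2 ⟨p, a⟩)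
          = (t p.1 : ℝ) * (if p.1 = iu ∧ p.2.val = q1.val then 1
            else if p.1 = iu ∧ p.2.val = q2.val then -1 else 0) := by
        intro p
        rw [Finset.sum_congr rfl (fun a _ => hδ p a), Finset.sum_const, Finset.card_univ,
          Fintype.card_fin, nsmul_eq_mul]
      have hS2 : (∑ u, w2 u) = 0 := by
        rw [sum_mv l t w2, Finset.sum_congr rfl (fun p _ => hσ2 p),
          sum_part_pair l iu q1 q2 hq12 (fun p => (t p.1 : ℝ))]
        simp
      refine ⟨w2, ?_, ?_, ?_⟩
      · intro hcon
        have h1 := congrFun hcon ⟨⟨iu, q1⟩, ⟨0, ht iu⟩⟩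
        simp only [Pi.zero_apply] at h1
        have h2 : w2 ⟨⟨iu, q1⟩, ⟨0, ht iu⟩⟩ = 1 := if_pos ⟨rfl, rfl⟩
        rw [h1] at h2
        norm_num at h2
      · funext u
        rw [hA w2 u, hS2, hσ2 u.1]
        have h2 : (μ • w2) u = μ * w2 u := rfl
        rw [h2]
        have h3 : w2 u = (if u.1.1 = iu ∧ u.1.2.val = q1.val then (1:ℝ)
            else if u.1.1 = iu ∧ u.1.2.val = q2.val then -1 else 0) := rfl
        rw [h3]
        split_ifs with hc1 hc2
        · rw [hc1.1, hi']; ring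
        · rw [hc2.1, hi']; ring
        · ring
      · have hcalc : ∑ u, d u * w2 u = tau l t ⟨iu, q1⟩ - tau l t ⟨iu, q2⟩ := by
          rw [sum_mv l t (fun u => d u * w2 u)]
          have h1 : ∀ p : PartIdx l, (∑ a : Fin (t p.1), d ⟨p, a⟩ * w2 ⟨p, a⟩)
              = tau l t p * (if p.1 = iu ∧ p.2.val = q1.val then 1
                else if p.1 = iu ∧ p.2.val = q2.val then -1 else 0) := by
            intro p
            rw [Finset.sum_congr rfl (fun a _ => by rw [hδ p a]), ← Finset.sum_mul]
            rfl
          rw [Finset.sum_congr rfl (fun p _ => h1 p),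
            sum_part_pair l iu q1 q2 hq12 (fun p => tau l t p)]
        rw [hcalc]
        exact sub_ne_zero.2 hq
    · -- μ avoids all poles : the "secular" case
      push_neg at hres
      have hne' : ∀ i', μ + (t i' : ℝ) ≠ 0 := by
        intro i' h
        exact hres i' (by linarith)
      have hSne : S ≠ 0 := by
        intro hS0
        apply hu0
        rw [hwcc u0.1 u0.2]
        have := heq2 u0.1
        rw [hS0] at this
        have h2 := mul_eq_zero.1 this
        rcases h2 with h2 | h2
        · exact absurd h2 (hne' u0.1.1)
        · exact h2
      have hcceq : ∀ p : PartIdx l, cc p = S * (μ + (t p.1 : ℝ))⁻¹ := by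
        intro p
        have h1 := heq2 p
        rw [← h1, mul_comm, ← mul_assoc, inv_mul_cancel₀ (hne' p.1), one_mul]
      have hg1 : ∑ p : PartIdx l, (t p.1 : ℝ) * (μ + (t p.1 : ℝ))⁻¹ = 1 := by
        have h1 : S = S * ∑ p : PartIdx l, (t p.1 : ℝ) * (μ + (t p.1 : ℝ))⁻¹ := by
          calc S = ∑ p : PartIdx l, (t p.1 : ℝ) * cc p := hScc
            _ = ∑ p : PartIdx l, S * ((t p.1 : ℝ) * (μ + (t p.1 : ℝ))⁻¹) := by
                apply Finset.sum_congr rfl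
                intro p _
                rw [hcceq p]; ring
            _ = S * ∑ p : PartIdx l, (t p.1 : ℝ) * (μ + (t p.1 : ℝ))⁻¹ := by
                rw [← Finset.mul_sum]
        have h2 : S * 1 = S * ∑ p : PartIdx l, (t p.1 : ℝ) * (μ + (t p.1 : ℝ))⁻¹ := by
          rw [mul_one]; exact h1
        exact (mul_left_cancel₀ hSne h2).symm
      have hg : ∑ i, (l i : ℝ) * (t i : ℝ) / (μ + (t i : ℝ)) = 1 := by
        rw [← hg1, sum_part l (fun p => (t p.1 : ℝ) * (μ + (t p.1 : ℝ))⁻¹)]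
        apply Finset.sum_congr rfl
        intro i _
        have e : ∀ q : Fin (l i), (t (⟨i, q⟩ : PartIdx l).1 : ℝ)
            * (μ + (t (⟨i, q⟩ : PartIdx l).1 : ℝ))⁻¹
            = (t i : ℝ) * (μ + (t i : ℝ))⁻¹ := fun q => rfl
        rw [Finset.sum_congr rfl (fun q _ => e q), Finset.sum_const, Finset.card_univ,
          Fintype.card_fin, nsmul_eq_mul, div_eq_mul_inv]
        ring
      -- the eigenvector with nonzero sum
      set w' : MV l t → ℝ := fun u => (μ + (t u.1.1 : ℝ))⁻¹ with hw'def
      have hσ' : ∀ p : PartIdx l, (∑ a : Fin (t p.1), w' ⟨p, a⟩)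
          = (t p.1 : ℝ) * (μ + (t p.1 : ℝ))⁻¹ := by
        intro p
        have e : ∀ a : Fin (t p.1), w' ⟨p, a⟩ = (μ + (t p.1 : ℝ))⁻¹ := fun a => rfl
        rw [Finset.sum_congr rfl (fun a _ => e a), Finset.sum_const, Finset.card_univ,
          Fintype.card_fin, nsmul_eq_mul]
      have hS' : (∑ u, w' u) = 1 := by
        rw [sum_mv l t w']
        rw [Finset.sum_congr rfl (fun p _ => hσ' p)]
        exact hg1
      refine ⟨w', ?_, ?_, ?_⟩
      · intro hcon
        have := congrFun hcon u0
        simp only [hw'def, Pi.zero_apply] at this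
        exact (inv_ne_zero (hne' u0.1.1)) this
      · funext u
        rw [hA w' u, hS', hσ' u.1]
        have h2 : (μ • w') u = μ * (μ + (t u.1.1 : ℝ))⁻¹ := rfl
        rw [h2]
        have hz := hne' u.1.1
        field_simp
        ring
      · -- the sum over all vertices
        have hcalc : ∑ u, d u * w' u = ∑ i, Tr l t i / (μ + (t i : ℝ)) := by
          rw [sum_mv l t (fun u => d u * w' u)]
          have h1 : ∀ p : PartIdx l, (∑ a : Fin (t p.1), d ⟨p, a⟩ * w' ⟨p, a⟩)
              = tau l t p * (μ + (t p.1 : ℝ))⁻¹ := by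
            intro p
            have e : ∀ a : Fin (t p.1), d ⟨p, a⟩ * w' ⟨p, a⟩
                = d ⟨p, a⟩ * (μ + (t p.1 : ℝ))⁻¹ := fun a => rfl
            rw [Finset.sum_congr rfl (fun a _ => e a), ← Finset.sum_mul]
            rfl
          rw [Finset.sum_congr rfl (fun p _ => h1 p)]
          rw [sum_part l (fun p => tau l t p * (μ + (t p.1 : ℝ))⁻¹)]
          apply Finset.sum_congr rfl
          intro i _
          have e2 : ∀ q : Fin (l i), tau l t ⟨i, q⟩ * (μ + (t (⟨i, q⟩ : PartIdx l).1 : ℝ))⁻¹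
              = tau l t ⟨i, q⟩ * (μ + (t i : ℝ))⁻¹ := fun q => rfl
          rw [Finset.sum_congr rfl (fun q _ => e2 q), ← Finset.sum_mul, div_eq_mul_inv]
          rfl
        rw [hcalc]
        exact certAll l t hanti hl ht hn hs μ hne' hg
end

section
/- Let K_{t_1,...,t_s} be the complete multipartite graph with exactly one part U_i of each size t_i, where t_1 > t_2 > ... > t_s ≥ 2 and s ≥ 2. Let X consist of exactly one vertex from each part U_i. Then every eigenvalue of the adjacency matrix of the signed graph obtained from K_{t_1,...,t_s} by switching about X is a main eigenvalue. -/
open Matrix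

/-- The complete multipartite graph `K_{t_1, …, t_s}` with exactly one part `U_i` of each
size `t i`; its vertices are pairs `⟨i, a⟩` with `a : Fin (t i)`. -/
def cmGraph1 {s : ℕ} (t : Fin s → ℕ) : SimpleGraph ((i : Fin s) × Fin (t i)) :=
  SimpleGraph.completeMultipartiteGraph (fun i : Fin s => Fin (t i))

instance cm1Decidable {s : ℕ} (t : Fin s → ℕ) : DecidableRel (cmGraph1 t).Adj :=
  fun a b => inferInstanceAs (Decidable (a.1 ≠ b.1))

/-!
Conjugating by the diagonal sign matrix `D` of the switching turns an eigenvector `v` of the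
switched matrix into the eigenvector `w = D v` of the adjacency matrix `A` of `K_{t_1,…,t_s}`,
and the entry sum of `v` into the signed sum `∑ w - 2 ∑_{u ∈ X} w u`. Since `(A w)_u` is the
total sum of `w` minus its sum over the part of `u`:

* for `μ = 0`, the vector equal to `1 - t_i` at `x i` and to `1` elsewhere on `U_i` has zero part
  sums, hence lies in the kernel, and its signed sum is `2 ∑ (t_i - 1) > 0`;
* for `μ ≠ 0`, every eigenvector is constant, say `c_i`, on `U_i`, with
  `(μ + t_i) c_i = S := ∑ t_j c_j`, and its signed sum is `∑ (t_i - 2) c_i`. Distinctness of the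
  `t_i` forces `S ≠ 0`. If the signed sum vanished, then `∑ c_i = S / 2`, summing the equations
  gives `μ = 2 (s - 1)`, and `∑ 1 / (μ + t_i) = 1 / 2` contradicts `μ + t_i ≥ 2 s`, which is
  strict for some `i` because the `t_i ≥ 2` are distinct.
-/

open Finset SimpleGraph Function

def switchSign {m : Type*} [DecidableEq m] (X : Finset m) (u : m) : ℝ :=
  if u ∈ X then -1 else 1

section Switching

variable {m : Type*} [DecidableEq m] (X : Finset m)

lemma switchSign_mul_switchSign_mul (f : m → ℝ) : switchSign X * (switchSign X * f) = f := by
  ext u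
  simp only [Pi.mul_apply, switchSign]
  split_ifs <;> ring

lemma switchSign_mul_eq_zero_iff {f : m → ℝ} : switchSign X * f = 0 ↔ f = 0 := by
  constructor
  · intro h
    rw [← switchSign_mul_switchSign_mul X f, h, mul_zero]
  · rintro rfl
    exact mul_zero _

variable [Fintype m]

lemma switchMatrix_mulVec (A : Matrix m m ℝ) (v : m → ℝ) :
    switchMatrix X A *ᵥ v = switchSign X * (A *ᵥ (switchSign X * v)) := by
  ext u
  simp only [mulVec, dotProduct, switchMatrix, switchSign, Pi.mul_apply, mul_sum]
  exact sum_congr rfl fun _ _ => by ring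

lemma switchMatrix_mulVec_eq_smul_iff {A : Matrix m m ℝ} {v : m → ℝ} {μ : ℝ} :
    switchMatrix X A *ᵥ v = μ • v ↔ A *ᵥ (switchSign X * v) = μ • (switchSign X * v) := by
  rw [switchMatrix_mulVec, ← mul_smul_comm]
  constructor
  · intro h
    rw [← h, switchSign_mul_switchSign_mul]
  · intro h
    rw [h, switchSign_mul_switchSign_mul]

lemma sum_switchSign_mul (w : m → ℝ) :
    ∑ u, switchSign X u * w u = ∑ u, w u - 2 * ∑ u ∈ X, w u := by
  simp only [switchSign, ite_mul, neg_one_mul, one_mul, sum_ite]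
  rw [← sum_filter_add_sum_filter_not univ (· ∈ X) w, sum_neg_distrib, filter_mem_eq_inter,
    univ_inter]
  ring

end Switching

section QuotientSystem

variable {ι : Type*} [Fintype ι] {t c : ι → ℝ} {μ : ℝ}

lemma sum_mul_ne_zero_of_quotient (ht : Injective t) (ht0 : ∀ i, t i ≠ 0)
    (h : ∀ i, (μ + t i) * c i = ∑ j, t j * c j) (hc : c ≠ 0) : ∑ j, t j * c j ≠ 0 := by
  intro hS
  obtain ⟨i, hci⟩ := Function.ne_iff.1 hc
  have hμ : μ = -t i := by
    have := (mul_eq_zero.1 ((h i).trans hS)).resolve_right hci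
    linarith
  have hsupp : ∀ j ≠ i, c j = 0 := fun j hj =>
    (mul_eq_zero.1 ((h j).trans hS)).resolve_left fun h' => hj (ht (by linarith))
  rw [sum_eq_single i (fun j _ hj => by rw [hsupp j hj, mul_zero]) (by simp)] at hS
  exact mul_ne_zero (ht0 i) hci hS

lemma sum_sub_two_mul_ne_zero_of_quotient [Nontrivial ι] (ht : Injective t)
    (ht2 : ∀ i, 2 ≤ t i) (h : ∀ i, (μ + t i) * c i = ∑ j, t j * c j) (hc : c ≠ 0) :
    ∑ i, (t i - 2) * c i ≠ 0 := by
  set S := ∑ j, t j * c j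
  have hS : S ≠ 0 := sum_mul_ne_zero_of_quotient ht (fun i => by linarith [ht2 i]) h hc
  intro hT
  set n : ℝ := (Fintype.card ι : ℝ)
  have hsum : ∑ i, c i = S / 2 := by
    have : ∑ i, (t i - 2) * c i = S - 2 * ∑ i, c i := by
      simp only [sub_mul, sum_sub_distrib, mul_sum]
      rfl
    linarith
  have hμ : μ = 2 * (n - 1) := by
    have : μ * (S / 2) + S = n * S := calc
      μ * (S / 2) + S = ∑ i, (μ + t i) * c i := by
        rw [← hsum, mul_sum, ← sum_add_distrib]
        simp only [add_mul]
      _ = n * S := by simp only [h, sum_const, card_univ, nsmul_eq_mul, n]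
    apply mul_right_cancel₀ hS
    linarith
  have hn : 0 < n := by positivity
  have hd : ∀ i, 2 * n ≤ μ + t i := fun i => by linarith [ht2 i]
  have hrecip : ∑ i, 1 / (μ + t i) = 1 / 2 := by
    apply mul_left_cancel₀ hS
    rw [mul_sum, ← div_eq_mul_one_div, ← hsum]
    refine sum_congr rfl fun i _ => ?_
    rw [← h i]
    field_simp [(by linarith [hd i] : μ + t i ≠ 0)]
  obtain ⟨i₀, hi₀⟩ : ∃ i, 2 < t i := by
    obtain ⟨i, j, hij⟩ := exists_pair_ne ι
    by_contra! h2
    exact hij (ht (by linarith [h2 i, h2 j, ht2 i, ht2 j]))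
  have : ∑ i, 1 / (μ + t i) < ∑ _i : ι, 1 / (2 * n) :=
    sum_lt_sum (fun i _ => one_div_le_one_div_of_le (by positivity) (hd i))
      ⟨i₀, mem_univ _, one_div_lt_one_div_of_lt (by positivity) (by linarith)⟩
  rw [hrecip, sum_const, card_univ, nsmul_eq_mul] at this
  field_simp at this
  linarith

end QuotientSystem

section CompleteMultipartite

variable {ι : Type*} [Fintype ι] [DecidableEq ι] {V : ι → Type*} [∀ i, Fintype (V i)]

lemma completeMultipartiteGraph_adjMatrix_mulVec_apply (w : (Σ i, V i) → ℝ) (u : Σ i, V i) :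
    ((completeMultipartiteGraph V).adjMatrix ℝ *ᵥ w) u = ∑ v, w v - ∑ b, w ⟨u.1, b⟩ := by
  simp only [mulVec, dotProduct, adjMatrix_apply, comap_adj, top_adj, Fintype.sum_sigma]
  simp only [ite_not, ite_mul, zero_mul, one_mul, sum_ite_irrel, sum_const_zero]
  rw [eq_sub_iff_add_eq, ← Fintype.sum_ite_eq u.1 fun j => ∑ b, w ⟨j, b⟩, ← sum_add_distrib]
  exact sum_congr rfl fun j _ => by split_ifs <;> simp

lemma completeMultipartiteGraph_adjMatrix_mulVec_eq_zero {w : (Σ i, V i) → ℝ}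
    (hw : ∀ i, ∑ b, w ⟨i, b⟩ = 0) : (completeMultipartiteGraph V).adjMatrix ℝ *ᵥ w = 0 := by
  ext u
  rw [completeMultipartiteGraph_adjMatrix_mulVec_apply, Fintype.sum_sigma, hw,
    sum_congr rfl fun i _ => hw i]
  simp

lemma exists_quotient_of_adjMatrix_mulVec_eq_smul {w : (Σ i, V i) → ℝ} {μ : ℝ} (hμ : μ ≠ 0)
    (hw : (completeMultipartiteGraph V).adjMatrix ℝ *ᵥ w = μ • w) :
    ∃ c : ι → ℝ, (∀ u, w u = c u.1) ∧
      ∀ i, (μ + Fintype.card (V i)) * c i = ∑ j, (Fintype.card (V j) : ℝ) * c j := by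
  set c : ι → ℝ := fun i => (∑ u, w u - ∑ b, w ⟨i, b⟩) / μ
  have hwc : ∀ u, w u = c u.1 := fun u => by
    rw [eq_div_iff hμ, mul_comm, ← completeMultipartiteGraph_adjMatrix_mulVec_apply, hw,
      Pi.smul_apply, smul_eq_mul]
  have hpart : ∀ i, ∑ b, w ⟨i, b⟩ = Fintype.card (V i) * c i := fun i => by simp [hwc]
  refine ⟨c, hwc, fun i => ?_⟩
  rw [← sum_congr rfl fun j _ => hpart j, ← Fintype.sum_sigma, add_mul, ← hpart i]
  simp only [c]
  field_simp
  ring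

variable [∀ i, DecidableEq (V i)]

lemma sum_switchSign_transversal_mul (x : ∀ i, V i) (w : (Σ i, V i) → ℝ) :
    ∑ u, switchSign (univ.image fun i => ⟨i, x i⟩) u * w u =
      ∑ u, w u - 2 * ∑ i, w ⟨i, x i⟩ := by
  rw [sum_switchSign_mul, sum_image fun i _ j _ h => congrArg Sigma.fst h]

theorem exists_adjMatrix_mulVec_eq_smul_sum_switchSign_mul_ne_zero [Nontrivial ι]
    (x : ∀ i, V i) (hinj : Injective fun i => Fintype.card (V i))
    (htwo : ∀ i, 2 ≤ Fintype.card (V i)) {μ : ℝ}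
    (hμ : ∃ w ≠ 0, (completeMultipartiteGraph V).adjMatrix ℝ *ᵥ w = μ • w) :
    ∃ w, (completeMultipartiteGraph V).adjMatrix ℝ *ᵥ w = μ • w ∧
      ∑ u, switchSign (univ.image fun i => ⟨i, x i⟩) u * w u ≠ 0 := by
  rcases eq_or_ne μ 0 with rfl | hμ0
  · set w : (Σ i, V i) → ℝ :=
      fun u => 1 - if u.2 = x u.1 then (Fintype.card (V u.1) : ℝ) else 0
    have hpart (i : ι) : ∑ b, w ⟨i, b⟩ = 0 := by simp [w, sum_sub_distrib]
    refine ⟨w, by rw [zero_smul, completeMultipartiteGraph_adjMatrix_mulVec_eq_zero hpart], ?_⟩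
    have hneg : ∑ i, w ⟨i, x i⟩ < 0 := sum_neg (fun i _ => by
      have : (2 : ℝ) ≤ Fintype.card (V i) := by exact_mod_cast htwo i
      simp only [w, if_pos]
      linarith) univ_nonempty
    rw [sum_switchSign_transversal_mul, Fintype.sum_sigma, sum_congr rfl fun i _ => hpart i]
    simp only [sum_const_zero]
    linarith
  · obtain ⟨w, hw0, hw⟩ := hμ
    obtain ⟨c, hwc, hc⟩ := exists_quotient_of_adjMatrix_mulVec_eq_smul hμ0 hw
    refine ⟨w, hw, ?_⟩
    have hsum : ∑ u, switchSign (univ.image fun i => ⟨i, x i⟩) u * w u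
        = ∑ i, ((Fintype.card (V i) : ℝ) - 2) * c i := by
      rw [sum_switchSign_transversal_mul, Fintype.sum_sigma]
      simp [hwc, sub_mul, sum_sub_distrib, mul_sum]
    rw [hsum]
    exact sum_sub_two_mul_ne_zero_of_quotient (Nat.cast_injective.comp hinj)
      (fun i => by exact_mod_cast htwo i) hc fun h => hw0 (funext fun u => by simp [hwc, h])

end CompleteMultipartite

/-- Let `K_{t_1, …, t_s}` be the complete multipartite graph with one
part of each size `t i`, where `t_1 > ⋯ > t_s ≥ 2` and `s ≥ 2`, and let `X` consist of
exactly one vertex `⟨i, x i⟩` from each part.  Then every eigenvalue of the adjacency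
matrix of the signed graph obtained by switching about `X` is main. -/
theorem stmt13 {s : ℕ} (hs : 2 ≤ s) (t : Fin s → ℕ)
    (hanti : ∀ i j : Fin s, i < j → t j < t i)
    (hts : 2 ≤ t ⟨s - 1, by omega⟩)
    (x : (i : Fin s) → Fin (t i))
    (X : Finset ((i : Fin s) × Fin (t i)))
    (hX : X = Finset.univ.image (fun i : Fin s => (⟨i, x i⟩ : (i : Fin s) × Fin (t i)))) :
    ∀ μ : ℝ,
      (∃ v : ((i : Fin s) × Fin (t i)) → ℝ, v ≠ 0 ∧
        (switchMatrix X ((cmGraph1 t).adjMatrix ℝ)).mulVec v = μ • v) →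
      (∃ v : ((i : Fin s) × Fin (t i)) → ℝ, v ≠ 0 ∧
        (switchMatrix X ((cmGraph1 t).adjMatrix ℝ)).mulVec v = μ • v ∧ ∑ u, v u ≠ 0) := by
  rintro μ ⟨v, hv0, hv⟩
  subst hX
  have : Nontrivial (Fin s) := Fin.nontrivial_iff_two_le.2 hs
  have htwo (i : Fin s) : 2 ≤ Fintype.card (Fin (t i)) := by
    rw [Fintype.card_fin]
    exact hts.trans (StrictAnti.antitone hanti (Fin.le_def.2 (Nat.le_sub_one_of_lt i.2)))
  rw [switchMatrix_mulVec_eq_smul_iff] at hv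
  obtain ⟨w, hw, hsum⟩ := exists_adjMatrix_mulVec_eq_smul_sum_switchSign_mul_ne_zero x
    (by simpa using StrictAnti.injective hanti) htwo
    ⟨_, (switchSign_mul_eq_zero_iff _).not.2 hv0, hv⟩
  refine ⟨switchSign _ * w, fun h => hsum ?_, (switchMatrix_mulVec_eq_smul_iff _).2 ?_, hsum⟩
  · simp [← Pi.mul_apply, h]
  · rwa [switchSign_mul_switchSign_mul]
end
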